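/- arXiv:2103.00905 — 3 statements merged into one kernel-verified Lean document; each statement's English description precedes it below -/
import Mathlib

section
/- Suppose all assets are eligible, i.e., m=d so that M=ℝ^d. Fix t∈𝕋 and let R̄_t be a time decomposable conditional risk measure for vectors on L̄^∞(ℝ^d). Set C_s:=R̄_t(0)_s for s<t and ρ_t(Y):=R̄_t(Y1_{𝕋_t})_t. Then for every X∈L̄^∞(ℝ^d): R̄_t(X)=∑_{s=0}^{t−1}(−X_s+C_s)1_{{s}}+ρ_t(π_{t,T}(X))1_{𝕋_t}. -/
open MeasureTheory Finset Pointwise Filter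

noncomputable section

namespace RMPaper

variable {Ω : Type*}

/-- The space `L^∞(m; ℝ^d)` of bounded `m`-measurable `ℝ^d`-valued random vectors
(identified with its set of representatives). -/
def Linf (m : MeasurableSpace Ω) (d : ℕ) : Set (Ω → Fin d → ℝ) :=
  {X | Measurable[m] X ∧ ∃ C : ℝ, ∀ ω i, |X ω i| ≤ C}

/-- Membership in the subspace of eligible assets `M = ℝ^md × {0}^(d-md)`. -/
def inM (d md : ℕ) (x : Fin d → ℝ) : Prop := ∀ i : Fin d, md ≤ (i : ℕ) → x i = 0

/-- The space `M_t = L^∞_t(M)` of eligible portfolios. -/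
def Msp {m0 : MeasurableSpace Ω} (m : MeasurableSpace Ω) (P : @Measure Ω m0) (d md : ℕ) :
    Set (Ω → Fin d → ℝ) :=
  {X | X ∈ Linf m d ∧ ∀ᵐ ω ∂P, inM d md (X ω)}

/-- The cone `M_{t,+}` of nonnegative eligible portfolios. -/
def MspP {m0 : MeasurableSpace Ω} (m : MeasurableSpace Ω) (P : @Measure Ω m0) (d md : ℕ) :
    Set (Ω → Fin d → ℝ) :=
  {X | X ∈ Msp m P d md ∧ ∀ᵐ ω ∂P, ∀ i, 0 ≤ X ω i}

/-- The space `L^1_t(ℝ^d)`. -/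
def L1t {m0 : MeasurableSpace Ω} (m : MeasurableSpace Ω) (P : @Measure Ω m0) (d : ℕ) :
    Set (Ω → Fin d → ℝ) :=
  {Y | Measurable[m] Y ∧ ∀ i, Integrable (fun ω => Y ω i) P}

/-- The weak* topology `σ(L^∞_t, L^1_t)`, defined as the topology induced by all
pairings with elements of `L^1_t`. -/
def wStar {m0 : MeasurableSpace Ω} (m : MeasurableSpace Ω) (P : @Measure Ω m0) (d : ℕ) :
    TopologicalSpace (Ω → Fin d → ℝ) :=
  TopologicalSpace.induced
    (fun X => fun Y : ↥(L1t m P d) => ∫ ω, ∑ i, Y.1 ω i * X ω i ∂P) Pi.topologicalSpace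

/-- `S` is closed in the subspace topology (induced by `τ`) on `A`. -/
def IsClosedIn {β : Type*} (τ : TopologicalSpace β) (A S : Set β) : Prop :=
  @closure β τ S ∩ A ⊆ S

/-- `F_t`-decomposability of a set of random vectors. -/
def Decomp (m : MeasurableSpace Ω) {d : ℕ} (S : Set (Ω → Fin d → ℝ)) : Prop :=
  ∀ A : Set Ω, MeasurableSet[m] A → ∀ u ∈ S, ∀ v ∈ S,
    (A.indicator u + Aᶜ.indicator v) ∈ S

/-- Finiteness at zero of a conditional risk measure: the value at `0` is nonempty, closed
(w.r.t. the subspace topology on `M_t`), `F_t`-decomposable, and generated by a measurable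
random set `R₀` with `P[R₀ = M] = 0`. -/
def FinAtZero {m0 : MeasurableSpace Ω} (m : MeasurableSpace Ω) (P : @Measure Ω m0) (d md : ℕ)
    (S : Set (Ω → Fin d → ℝ)) : Prop :=
  S.Nonempty ∧ IsClosedIn (wStar m P d) (Msp m P d md) S ∧ Decomp m S ∧
    ∃ R0 : Ω → Set (Fin d → ℝ),
      MeasurableSet[m.prod inferInstance] {p : Ω × (Fin d → ℝ) | p.2 ∈ R0 p.1} ∧
      S = {u | u ∈ Linf m d ∧ ∀ᵐ ω ∂P, u ω ∈ R0 ω} ∧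
      P {ω | R0 ω = {x | inM d md x}} = 0

/-- A set-valued conditional risk measure for vectors with domain `L^∞(mDom; ℝ^d)` and
values that are upper subsets of `M_t ⊆ L^∞(mVal; ℝ^d)`: cash invariance, monotonicity, and
finiteness at zero. -/
def IsCRMv {m0 : MeasurableSpace Ω} (mDom mVal : MeasurableSpace Ω) (P : @Measure Ω m0)
    (d md : ℕ) (R : (Ω → Fin d → ℝ) → Set (Ω → Fin d → ℝ)) : Prop :=
  (∀ X ∈ Linf mDom d, R X ⊆ Msp mVal P d md ∧ R X + MspP mVal P d md = R X) ∧
  (∀ X ∈ Linf mDom d, ∀ mm ∈ Msp mVal P d md, R (X + mm) = (fun u => u - mm) '' R X) ∧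
  (∀ X ∈ Linf mDom d, ∀ Y ∈ Linf mDom d, (∀ᵐ ω ∂P, ∀ i, X ω i ≤ Y ω i) → R X ⊆ R Y) ∧
  FinAtZero mVal P d md (R 0)

/-- The space `R^{∞,d}_t` of adapted, uniformly bounded processes starting at time `t`. -/
def procSp (T : ℕ) (F : Fin (T+1) → MeasurableSpace Ω) (d : ℕ) (t : Fin (T+1)) :
    Set (Fin (T+1) → Ω → Fin d → ℝ) :=
  {X | (∀ s, Measurable[F s] (X s)) ∧ (∃ C : ℝ, ∀ s ω i, |X s ω i| ≤ C) ∧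
    ∀ s, s < t → X s = 0}

/-- A set-valued conditional risk measure for processes at time `t`. -/
def IsCRMp {m0 : MeasurableSpace Ω} (T : ℕ) (F : Fin (T+1) → MeasurableSpace Ω)
    (P : @Measure Ω m0) (d md : ℕ) (t : Fin (T+1))
    (ρ : (Fin (T+1) → Ω → Fin d → ℝ) → Set (Ω → Fin d → ℝ)) : Prop :=
  (∀ X ∈ procSp T F d t, ρ X ⊆ Msp (F t) P d md ∧ ρ X + MspP (F t) P d md = ρ X) ∧
  (∀ X ∈ procSp T F d t, ∀ mm ∈ Msp (F t) P d md,
    ρ (fun s ω i => X s ω i + (if t ≤ s then mm ω i else 0)) = (fun u => u - mm) '' ρ X) ∧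
  (∀ X ∈ procSp T F d t, ∀ Y ∈ procSp T F d t,
    (∀ᵐ ω ∂P, ∀ s i, X s ω i ≤ Y s ω i) → ρ X ⊆ ρ Y) ∧
  FinAtZero (F t) P d md (ρ 0)

/-- Normalization of a set-valued risk measure. -/
def NormalizedOn {β γ : Type*} [Zero β] [Add γ] (D : Set β) (R : β → Set γ) : Prop :=
  ∀ X ∈ D, R X = R X + R 0

/-- Conditional scaling of a random vector. -/
def scal {d : ℕ} (lam : Ω → ℝ) (u : Ω → Fin d → ℝ) : Ω → Fin d → ℝ := fun ω i => lam ω * u ω i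

/-- Conditional convexity of a risk measure for vectors. -/
def CondConvexV {m0 : MeasurableSpace Ω} (mDom mVal : MeasurableSpace Ω) (P : @Measure Ω m0)
    (d : ℕ) (R : (Ω → Fin d → ℝ) → Set (Ω → Fin d → ℝ)) : Prop :=
  ∀ X ∈ Linf mDom d, ∀ Y ∈ Linf mDom d, ∀ lam : Ω → ℝ,
    Measurable[mVal] lam → (∀ᵐ ω ∂P, lam ω ∈ Set.Icc (0:ℝ) 1) →
    scal lam '' R X + scal (fun ω => 1 - lam ω) '' R Y ⊆
      R (fun ω i => lam ω * X ω i + (1 - lam ω) * Y ω i)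

/-- Conditional positive homogeneity of a risk measure for vectors. -/
def CondPosHomV {m0 : MeasurableSpace Ω} (mDom mVal : MeasurableSpace Ω) (P : @Measure Ω m0)
    (d : ℕ) (R : (Ω → Fin d → ℝ) → Set (Ω → Fin d → ℝ)) : Prop :=
  ∀ X ∈ Linf mDom d, ∀ lam : Ω → ℝ,
    Measurable[mVal] lam → (∃ C : ℝ, ∀ ω, |lam ω| ≤ C) → (∀ᵐ ω ∂P, 0 < lam ω) →
    R (scal lam X) = scal lam '' R X

/-- Conditional convexity of a risk measure for processes. -/
def CondConvexP {m0 : MeasurableSpace Ω} (T : ℕ) (F : Fin (T+1) → MeasurableSpace Ω)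
    (P : @Measure Ω m0) (d : ℕ) (t : Fin (T+1))
    (ρ : (Fin (T+1) → Ω → Fin d → ℝ) → Set (Ω → Fin d → ℝ)) : Prop :=
  ∀ X ∈ procSp T F d t, ∀ Y ∈ procSp T F d t, ∀ lam : Ω → ℝ,
    Measurable[F t] lam → (∀ᵐ ω ∂P, lam ω ∈ Set.Icc (0:ℝ) 1) →
    scal lam '' ρ X + scal (fun ω => 1 - lam ω) '' ρ Y ⊆
      ρ (fun s ω i => lam ω * X s ω i + (1 - lam ω) * Y s ω i)

/-- Conditional positive homogeneity of a risk measure for processes. -/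
def CondPosHomP {m0 : MeasurableSpace Ω} (T : ℕ) (F : Fin (T+1) → MeasurableSpace Ω)
    (P : @Measure Ω m0) (d : ℕ) (t : Fin (T+1))
    (ρ : (Fin (T+1) → Ω → Fin d → ℝ) → Set (Ω → Fin d → ℝ)) : Prop :=
  ∀ X ∈ procSp T F d t, ∀ lam : Ω → ℝ,
    Measurable[F t] lam → (∃ C : ℝ, ∀ ω, |lam ω| ≤ C) → (∀ᵐ ω ∂P, 0 < lam ω) →
    ρ (fun s ω i => lam ω * X s ω i) = scal lam '' ρ X

/-! ### The optional filtration -/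

/-- The optional σ-algebra `F̄` on `Ω̄ = Ω × 𝕋`, generated by the sets `A × {t}`, `A ∈ F_t`. -/
def optSigma (T : ℕ) (F : Fin (T+1) → MeasurableSpace Ω) :
    MeasurableSpace (Ω × Fin (T+1)) :=
  MeasurableSpace.generateFrom
    {S | ∃ t : Fin (T+1), ∃ A : Set Ω, MeasurableSet[F t] A ∧ S = A ×ˢ ({t} : Set (Fin (T+1)))}

/-- The optional filtration `F̄_t` on `Ω̄ = Ω × 𝕋`. -/
def optFilt (T : ℕ) (F : Fin (T+1) → MeasurableSpace Ω) (t : Fin (T+1)) :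
    MeasurableSpace (Ω × Fin (T+1)) :=
  MeasurableSpace.generateFrom
    {S | (∃ r : Fin (T+1), r < t ∧ ∃ A : Set Ω, MeasurableSet[F r] A ∧
            S = A ×ˢ ({r} : Set (Fin (T+1)))) ∨
         (∃ A : Set Ω, MeasurableSet[F t] A ∧ S = A ×ˢ (Set.Ici t))}

/-- The reference measure `P̄ = P ⊗ μ` on the optional σ-algebra, determined by
`Ē[X] = E[∑_t μ_t X_t]`. -/
def optMeas {m0 : MeasurableSpace Ω} (T : ℕ) (F : Fin (T+1) → MeasurableSpace Ω)
    (P : @Measure Ω m0) (μ : Fin (T+1) → Ω → ℝ) : @Measure (Ω × Fin (T+1)) (optSigma T F) :=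
  ∑ t : Fin (T+1),
    @Measure.map Ω (Ω × Fin (T+1)) m0 (optSigma T F) (fun ω => (ω, t))
      (P.withDensity fun ω => ENNReal.ofReal (μ t ω))

/-! ### Embeddings between the base space and the optional space -/

/-- `v ↦ v 1_{{s}}` embedding a random vector at time `s`. -/
def embAt (T : ℕ) {d : ℕ} (s : Fin (T+1)) (v : Ω → Fin d → ℝ) :
    Ω × Fin (T+1) → Fin d → ℝ :=
  fun x i => if x.2 = s then v x.1 i else 0

/-- `u ↦ u 1_{𝕋_t}` embedding a random vector from time `t` onwards. -/
def embTail (T : ℕ) {d : ℕ} (t : Fin (T+1)) (u : Ω → Fin d → ℝ) :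
    Ω × Fin (T+1) → Fin d → ℝ :=
  fun x i => if t ≤ x.2 then u x.1 i else 0

/-- `Y ↦ Y 1_{𝕋_t}` embedding a process into `L̄^∞`. -/
def embProc (T : ℕ) {d : ℕ} (t : Fin (T+1)) (Y : Fin (T+1) → Ω → Fin d → ℝ) :
    Ω × Fin (T+1) → Fin d → ℝ :=
  fun x i => if t ≤ x.2 then Y x.2 x.1 i else 0

/-- `π_{t,T}(X)`, the process associated with `X ∈ L̄^∞`. -/
def procOf (T : ℕ) {d : ℕ} (t : Fin (T+1)) (X : Ω × Fin (T+1) → Fin d → ℝ) :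
    Fin (T+1) → Ω → Fin d → ℝ :=
  fun s ω i => if t ≤ s then X (ω, s) i else 0

/-- `X ↦ X 1_{{s}}` on the optional space. -/
def cutAt (T : ℕ) {d : ℕ} (s : Fin (T+1)) (X : Ω × Fin (T+1) → Fin d → ℝ) :
    Ω × Fin (T+1) → Fin d → ℝ :=
  fun x i => if x.2 = s then X x i else 0

/-- `X ↦ X 1_{𝕋_t}` on the optional space. -/
def cutTail (T : ℕ) {d : ℕ} (t : Fin (T+1)) (X : Ω × Fin (T+1) → Fin d → ℝ) :
    Ω × Fin (T+1) → Fin d → ℝ :=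
  fun x i => if t ≤ x.2 then X x i else 0

/-- Evaluation `u ↦ u_s` of an optional random vector at time `s`. -/
def evalAt (T : ℕ) {d : ℕ} (s : Fin (T+1)) (u : Ω × Fin (T+1) → Fin d → ℝ) : Ω → Fin d → ℝ :=
  fun ω => u (ω, s)

/-- Time decomposability of a conditional risk measure on the optional space:
`R̄_t(X) = ∑_{s<t} R̄_t(X 1_{{s}}) 1_{{s}} + R̄_t(X 1_{𝕋_t}) 1_{𝕋_t}`. -/
def TimeDecomp (T : ℕ) (F : Fin (T+1) → MeasurableSpace Ω) {d : ℕ} (t : Fin (T+1))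
    (R : (Ω × Fin (T+1) → Fin d → ℝ) → Set (Ω × Fin (T+1) → Fin d → ℝ)) : Prop :=
  ∀ X ∈ Linf (optSigma T F) d,
    R X = (∑ s ∈ Iio t, (cutAt T s) '' R (cutAt T s X)) + (cutTail T t) '' R (cutTail T t X)

/-- The risk measure `R̄_t := ∑_{s<t} R_s((·)_s) 1_{{s}} + ρ_t(π_{t,T}(·)) 1_{𝕋_t}` on the
optional space built from a risk measure for processes and a family of risk measures for
vectors. -/
def buildBar (T : ℕ) {d : ℕ} (t : Fin (T+1))
    (R : Fin (T+1) → (Ω → Fin d → ℝ) → Set (Ω → Fin d → ℝ))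
    (ρ : (Fin (T+1) → Ω → Fin d → ℝ) → Set (Ω → Fin d → ℝ)) :
    (Ω × Fin (T+1) → Fin d → ℝ) → Set (Ω × Fin (T+1) → Fin d → ℝ) :=
  fun X => (∑ s ∈ Iio t, (embAt T s) '' R s (evalAt T s X)) +
    (embTail T t) '' ρ (procOf T t X)

/-- `ρ_t(Y) := R̄_t(Y 1_{𝕋_t})_t`, the risk measure for processes induced by a risk measure
on the optional space. -/
def barToProc (T : ℕ) {d : ℕ} (t : Fin (T+1))
    (Rb : (Ω × Fin (T+1) → Fin d → ℝ) → Set (Ω × Fin (T+1) → Fin d → ℝ)) :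
    (Fin (T+1) → Ω → Fin d → ℝ) → Set (Ω → Fin d → ℝ) :=
  fun Y => evalAt T t '' Rb (embProc T t Y)

/-- `R_s(Z) := R̄_t(Z 1_{{s}})_s`, the restricted risk measures for vectors induced by a risk
measure on the optional space. -/
def barToVec (T : ℕ) {d : ℕ} (t s : Fin (T+1))
    (Rb : (Ω × Fin (T+1) → Fin d → ℝ) → Set (Ω × Fin (T+1) → Fin d → ℝ)) :
    (Ω → Fin d → ℝ) → Set (Ω → Fin d → ℝ) :=
  fun Z => evalAt T s '' Rb (embAt T s Z)

/-! ### Acceptance sets -/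

/-- The acceptance set of a risk measure for vectors. -/
def accV {d : ℕ} {α : Type*} (D : Set (α → Fin d → ℝ))
    (R : (α → Fin d → ℝ) → Set (α → Fin d → ℝ)) : Set (α → Fin d → ℝ) :=
  {X | X ∈ D ∧ 0 ∈ R X}

/-- The acceptance set of a risk measure for processes. -/
def accP (T : ℕ) (F : Fin (T+1) → MeasurableSpace Ω) (d : ℕ) (t : Fin (T+1))
    (ρ : (Fin (T+1) → Ω → Fin d → ℝ) → Set (Ω → Fin d → ℝ)) :
    Set (Fin (T+1) → Ω → Fin d → ℝ) :=
  {X | X ∈ procSp T F d t ∧ 0 ∈ ρ X}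

/-! ### Multiportfolio time consistency -/

/-- Multiportfolio time consistency for a dynamic risk measure for processes. -/
def MPTCp (T : ℕ) (F : Fin (T+1) → MeasurableSpace Ω) (d : ℕ)
    (ρ : Fin (T+1) → (Fin (T+1) → Ω → Fin d → ℝ) → Set (Ω → Fin d → ℝ)) : Prop :=
  ∀ t s : Fin (T+1), t < s →
    ∀ X ∈ procSp T F d s, ∀ Z ∈ procSp T F d t, ∀ B ⊆ procSp T F d s,
      ρ s X ⊆ (⋃ Y ∈ B, ρ s Y) →
      ρ t (fun r ω i => (if t ≤ r ∧ r < s then Z r ω i else 0) +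
            (if s ≤ r then X r ω i else 0)) ⊆
        ⋃ Y ∈ B, ρ t (fun r ω i => (if t ≤ r ∧ r < s then Z r ω i else 0) +
            (if s ≤ r then Y r ω i else 0))

/-- The set `B = {(b_0,…,b_{s-1},b_s) : b_r ∈ B_r (r<s), b_s ∈ B_s}` of optional random
vectors, where a tuple denotes `∑_{r<s} b_r 1_{{r}} + b_s 1_{𝕋_s}`. -/
def tupleSet (T : ℕ) {d : ℕ} (s : Fin (T+1))
    (Br : Fin (T+1) → Set (Ω → Fin d → ℝ)) (Bs : Set (Fin (T+1) → Ω → Fin d → ℝ)) :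
    Set (Ω × Fin (T+1) → Fin d → ℝ) :=
  {Yb | ∃ b : Fin (T+1) → Ω → Fin d → ℝ, ∃ bs ∈ Bs, (∀ r, r < s → b r ∈ Br r) ∧
    Yb = fun x i => (if x.2 < s then b x.2 x.1 i else 0) + (if s ≤ x.2 then bs x.2 x.1 i else 0)}

/-- Multiportfolio time consistency for a dynamic risk measure for vectors on the optional
filtration. -/
def MPTCv (T : ℕ) (F : Fin (T+1) → MeasurableSpace Ω) {d : ℕ}
    (Rb : Fin (T+1) → (Ω × Fin (T+1) → Fin d → ℝ) → Set (Ω × Fin (T+1) → Fin d → ℝ)) :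
    Prop :=
  ∀ t s : Fin (T+1), t < s → ∀ X ∈ Linf (optSigma T F) d,
    ∀ Br : Fin (T+1) → Set (Ω → Fin d → ℝ), (∀ r, r < s → Br r ⊆ Linf (F r) d) →
    ∀ Bs ⊆ procSp T F d s,
      Rb s X ⊆ (⋃ Y ∈ tupleSet T s Br Bs, Rb s Y) →
      Rb t X ⊆ ⋃ Y ∈ tupleSet T s Br Bs, Rb t Y

/-- Joint multiportfolio time consistency of the pair `(ρ_t, (R^t_s)_{s<t})_{t∈𝕋}`. -/
def JointMPTC (T : ℕ) (F : Fin (T+1) → MeasurableSpace Ω) (d : ℕ)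
    (ρ : Fin (T+1) → (Fin (T+1) → Ω → Fin d → ℝ) → Set (Ω → Fin d → ℝ))
    (R : Fin (T+1) → Fin (T+1) → (Ω → Fin d → ℝ) → Set (Ω → Fin d → ℝ)) : Prop :=
  MPTCp T F d ρ ∧
  (∀ t s : Fin (T+1), t < s →
    ∀ Xr : Fin (T+1) → Ω → Fin d → ℝ, (∀ r, t ≤ r → r < s → Xr r ∈ Linf (F r) d) →
    ∀ Br : Fin (T+1) → Set (Ω → Fin d → ℝ), (∀ r, t ≤ r → r < s → Br r ⊆ Linf (F r) d) →
    ∀ Z ∈ procSp T F d s,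
      (∀ r, t ≤ r → r < s → R s r (Xr r) ⊆ ⋃ Y ∈ Br r, R s r Y) →
      ρ t (fun r ω i => (if t ≤ r ∧ r < s then Xr r ω i else 0) +
            (if s ≤ r then Z r ω i else 0)) ⊆
        ⋃ (Yr : Fin (T+1) → Ω → Fin d → ℝ) (_ : ∀ r, t ≤ r → r < s → Yr r ∈ Br r),
          ρ t (fun r ω i => (if t ≤ r ∧ r < s then Yr r ω i else 0) +
            (if s ≤ r then Z r ω i else 0))) ∧
  (∀ r t s : Fin (T+1), r < t → t < s → ∀ X ∈ Linf (F r) d, ∀ B ⊆ Linf (F r) d,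
    R s r X ⊆ (⋃ Y ∈ B, R s r Y) → R t r X ⊆ ⋃ Y ∈ B, R t r Y)

/-! ### Closedness and upper continuity -/

/-- The increments `Δa_s = a_s - a_{s-1}` (with `a_{-1} = 0`) of a process. -/
def dlt (T : ℕ) {d : ℕ} (a : Fin (T+1) → Ω → Fin d → ℝ) (s : Fin (T+1)) : Ω → Fin d → ℝ :=
  fun ω i => a s ω i - (if s = 0 then 0 else a (s - 1) ω i)

/-- The space `A^{1,d}_t` of adapted processes supported on `𝕋_t` with integrable total
variation. -/
def A1t {m0 : MeasurableSpace Ω} (T : ℕ) (F : Fin (T+1) → MeasurableSpace Ω)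
    (P : @Measure Ω m0) (d : ℕ) (t : Fin (T+1)) : Set (Fin (T+1) → Ω → Fin d → ℝ) :=
  {a | (∀ s, Measurable[F s] (a s)) ∧ (∀ s, s < t → a s = 0) ∧
    ∀ s i, Integrable (fun ω => dlt T a s ω i) P}

/-- The topology `σ(R^{∞,d}_t, A^{1,d}_t)` on the space of processes. -/
def procTop {m0 : MeasurableSpace Ω} (T : ℕ) (F : Fin (T+1) → MeasurableSpace Ω)
    (P : @Measure Ω m0) (d : ℕ) (t : Fin (T+1)) :
    TopologicalSpace (Fin (T+1) → Ω → Fin d → ℝ) :=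
  TopologicalSpace.induced
    (fun X => fun a : ↥(A1t T F P d t) =>
      ∫ ω, ∑ s ∈ Ici t, ∑ i, dlt T a.1 s ω i * X s ω i ∂P) Pi.topologicalSpace

/-- Closedness of the graph of a risk measure for processes in the product of
`σ(R^{∞,d}_t, A^{1,d}_t)` and the weak* topology. -/
def ClosedGraphP {m0 : MeasurableSpace Ω} (T : ℕ) (F : Fin (T+1) → MeasurableSpace Ω)
    (P : @Measure Ω m0) (d md : ℕ) (t : Fin (T+1))
    (ρ : (Fin (T+1) → Ω → Fin d → ℝ) → Set (Ω → Fin d → ℝ)) : Prop :=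
  IsClosedIn (@instTopologicalSpaceProd _ _ (procTop T F P d t) (wStar (F t) P d))
    (procSp T F d t ×ˢ Msp (F t) P d md)
    {p | p.1 ∈ procSp T F d t ∧ p.2 ∈ ρ p.1}

/-- Closedness of the graph of a risk measure for vectors in the product of the weak*
topologies. -/
def ClosedGraphV {m0 : MeasurableSpace Ω} (mDom mVal : MeasurableSpace Ω)
    (P : @Measure Ω m0) (d md : ℕ)
    (R : (Ω → Fin d → ℝ) → Set (Ω → Fin d → ℝ)) : Prop :=
  IsClosedIn (@instTopologicalSpaceProd _ _ (wStar mDom P d) (wStar mVal P d))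
    (Linf mDom d ×ˢ Msp mVal P d md)
    {p | p.1 ∈ Linf mDom d ∧ p.2 ∈ R p.1}

/-- The family `G(M_t; M_{t,+}) = {D ⊆ M_t : D = cl co (D + M_{t,+})}` of closed convex
upper subsets of `M_t`. -/
def Gsp {m0 : MeasurableSpace Ω} (m : MeasurableSpace Ω) (P : @Measure Ω m0) (d md : ℕ) :
    Set (Set (Ω → Fin d → ℝ)) :=
  {D | D ⊆ Msp m P d md ∧
    D = @closure _ (wStar m P d) (convexHull ℝ (D + MspP m P d md)) ∩ Msp m P d md}

/-- The family `G(M_t; -M_{t,+}) = {D ⊆ M_t : D = cl co (D - M_{t,+})}`. -/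
def GspMinus {m0 : MeasurableSpace Ω} (m : MeasurableSpace Ω) (P : @Measure Ω m0)
    (d md : ℕ) : Set (Set (Ω → Fin d → ℝ)) :=
  {D | D ⊆ Msp m P d md ∧
    D = @closure _ (wStar m P d) (convexHull ℝ (D - MspP m P d md)) ∩ Msp m P d md}

/-- `F_t`-conditional convexity of a set of random vectors. -/
def CondConvexSet {m0 : MeasurableSpace Ω} (m : MeasurableSpace Ω) (P : @Measure Ω m0)
    {d : ℕ} (D : Set (Ω → Fin d → ℝ)) : Prop :=
  ∀ u ∈ D, ∀ v ∈ D, ∀ lam : Ω → ℝ, Measurable[m] lam →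
    (∀ᵐ ω ∂P, lam ω ∈ Set.Icc (0:ℝ) 1) →
    (fun ω i => lam ω * u ω i + (1 - lam ω) * v ω i) ∈ D

/-- Conditional convex upper continuity of a risk measure for vectors. -/
def CUCv {m0 : MeasurableSpace Ω} (mDom mVal : MeasurableSpace Ω) (P : @Measure Ω m0)
    (d md : ℕ) (R : (Ω → Fin d → ℝ) → Set (Ω → Fin d → ℝ)) : Prop :=
  ∀ D ∈ GspMinus mVal P d md, CondConvexSet mVal P D →
    IsClosedIn (wStar mDom P d) (Linf mDom d) {X | X ∈ Linf mDom d ∧ (R X ∩ D).Nonempty}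

/-- Conditional convex upper continuity of a risk measure for processes. -/
def CUCp {m0 : MeasurableSpace Ω} (T : ℕ) (F : Fin (T+1) → MeasurableSpace Ω)
    (P : @Measure Ω m0) (d md : ℕ) (t : Fin (T+1))
    (ρ : (Fin (T+1) → Ω → Fin d → ℝ) → Set (Ω → Fin d → ℝ)) : Prop :=
  ∀ D ∈ GspMinus (F t) P d md, CondConvexSet (F t) P D →
    IsClosedIn (procTop T F P d t) (procSp T F d t)
      {X | X ∈ procSp T F d t ∧ (ρ X ∩ D).Nonempty}

/-! ### Dual variables and penalty functions -/

/-- The real-valued Radon–Nikodym density `dQ/dP`. -/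
def rnD {m0 : MeasurableSpace Ω} (P Q : @Measure Ω m0) : Ω → ℝ :=
  fun ω => (Q.rnDeriv P ω).toReal

/-- The conditional expectation operator `E_t = E[· | m]` (w.r.t. P). -/
def EE {m0 : MeasurableSpace Ω} (m : MeasurableSpace Ω) (P : @Measure Ω m0) (f : Ω → ℝ) :
    Ω → ℝ :=
  MeasureTheory.condExp m P f

/-- `ξ_{t,s}(Q) = E_s[dQ/dP] / E_t[dQ/dP]` on `{E_t[dQ/dP] > 0}` and `1` otherwise. -/
def xi {m0 : MeasurableSpace Ω} {T : ℕ} (F : Fin (T+1) → MeasurableSpace Ω)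
    (P Q : @Measure Ω m0) (t s : Fin (T+1)) : Ω → ℝ :=
  fun ω => if 0 < EE (F t) P (rnD P Q) ω
    then EE (F s) P (rnD P Q) ω / EE (F t) P (rnD P Q) ω
    else 1

/-- The `P`-a.s. version `E^Q_t[f] = E_t[ξ_{t,T}(Q) f]` of the `Q`-conditional expectation. -/
def EQ {m0 : MeasurableSpace Ω} {T : ℕ} (F : Fin (T+1) → MeasurableSpace Ω)
    (P Q : @Measure Ω m0) (t : Fin (T+1)) (f : Ω → ℝ) : Ω → ℝ :=
  EE (F t) P (fun ω => xi F P Q t (Fin.last T) ω * f ω)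

/-- The halfspace-type set `Γ_t(w) = {u ∈ L^∞_t : w^⊤ u ≥ 0 a.s.}`. -/
def Gam {m0 : MeasurableSpace Ω} (m : MeasurableSpace Ω) (P : @Measure Ω m0) (d : ℕ)
    (w : Ω → Fin d → ℝ) : Set (Ω → Fin d → ℝ) :=
  {u | u ∈ Linf m d ∧ ∀ᵐ ω ∂P, 0 ≤ ∑ i, w ω i * u ω i}

/-- Membership in the positive dual cone `M^*_{t,+} ⊆ L^1_t`. -/
def inMstarPlus {m0 : MeasurableSpace Ω} (m : MeasurableSpace Ω) (P : @Measure Ω m0)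
    (d md : ℕ) (w : Ω → Fin d → ℝ) : Prop :=
  w ∈ L1t m P d ∧ ∀ mm ∈ MspP m P d md, 0 ≤ ∫ ω, ∑ i, w ω i * mm ω i ∂P

/-- Membership in the orthogonal space `M_t^⊥ ⊆ L^1_t`. -/
def inMperp {m0 : MeasurableSpace Ω} (m : MeasurableSpace Ω) (P : @Measure Ω m0)
    (d md : ℕ) (w : Ω → Fin d → ℝ) : Prop :=
  w ∈ L1t m P d ∧ ∀ mm ∈ Msp m P d md, ∫ ω, ∑ i, w ω i * mm ω i ∂P = 0

/-- `M_t(P)`: probability measures absolutely continuous w.r.t. `P` agreeing with `P` on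
`F_t`. -/
def MtP {m0 : MeasurableSpace Ω} {T : ℕ} (F : Fin (T+1) → MeasurableSpace Ω)
    (P : @Measure Ω m0) (t : Fin (T+1)) : Set (@Measure Ω m0) :=
  {Q | IsProbabilityMeasure Q ∧ Q ≪ P ∧ ∀ A : Set Ω, MeasurableSet[F t] A → Q A = P A}

/-- The set `W_t` of dual variables for risk measures for processes. -/
def Wt {m0 : MeasurableSpace Ω} {T : ℕ} (F : Fin (T+1) → MeasurableSpace Ω)
    (P : @Measure Ω m0) (d md : ℕ) (t : Fin (T+1)) :
    Set ((Fin (T+1) → Fin d → @Measure Ω m0) × (Fin (T+1) → Ω → Fin d → ℝ)) :=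
  {Qw | (∀ s, t ≤ s → ∀ i, Qw.1 s i ∈ MtP F P t) ∧
    (∀ s, t ≤ s → inMstarPlus (F t) P d md (Qw.2 s) ∧ ¬ inMperp (F t) P d md (Qw.2 s)) ∧
    (∀ s, t ≤ s → (∀ᵐ ω ∂P, ∀ i, 0 ≤ Qw.2 s ω i * xi F P (Qw.1 s i) t s ω) ∧
      ∀ i, Integrable (fun ω => Qw.2 s ω i * xi F P (Qw.1 s i) t s ω) P)}

/-- The minimal penalty function `α_t(Q,w)` of a risk measure for processes with acceptance
set `At`. -/
def alphaP {m0 : MeasurableSpace Ω} (T : ℕ) (F : Fin (T+1) → MeasurableSpace Ω)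
    (P : @Measure Ω m0) (d md : ℕ) (t : Fin (T+1))
    (At : Set (Fin (T+1) → Ω → Fin d → ℝ))
    (Q : Fin (T+1) → Fin d → @Measure Ω m0) (w : Fin (T+1) → Ω → Fin d → ℝ) :
    Set (Ω → Fin d → ℝ) :=
  ⋂ Y ∈ At, ∑ s ∈ Ici t,
    (({fun ω i => EQ F P (Q s i) t (fun ω' => - Y s ω' i) ω} + Gam (F t) P d (w s)) ∩
      Msp (F t) P d md)

/-- The minimal penalty function of a (restricted) risk measure for vectors with acceptance
set `A`. -/
def alphaV {m0 : MeasurableSpace Ω} (m : MeasurableSpace Ω) (P : @Measure Ω m0) (d md : ℕ)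
    (A : Set (Ω → Fin d → ℝ)) (v : Ω → Fin d → ℝ) : Set (Ω → Fin d → ℝ) :=
  ⋂ Z ∈ A, (({fun ω i => - Z ω i} + Gam m P d v) ∩ Msp m P d md)

/-- Minkowski subtraction `A -• B = {m ∈ Mt : B + {m} ⊆ A}` within `Mt`. -/
def mSub {γ : Type*} [Add γ] (Mt A B : Set γ) : Set γ :=
  {mm | mm ∈ Mt ∧ ∀ b ∈ B, b + mm ∈ A}

/-- The maximal set of dual variables `W_t^{max}` for coherent risk measures for processes. -/
def WtMax {m0 : MeasurableSpace Ω} (T : ℕ) (F : Fin (T+1) → MeasurableSpace Ω)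
    (P : @Measure Ω m0) (d md : ℕ) (t : Fin (T+1))
    (At : Set (Fin (T+1) → Ω → Fin d → ℝ)) :
    Set ((Fin (T+1) → Fin d → @Measure Ω m0) × (Fin (T+1) → Ω → Fin d → ℝ)) :=
  {Qw | Qw ∈ Wt F P d md t ∧ ∀ Z ∈ At,
    ∀ᵐ ω ∂P, 0 ≤ ∑ s ∈ Ici t, ∑ i, Qw.2 s ω i * EQ F P (Qw.1 s i) t (fun ω' => Z s ω' i) ω}

/-! ### Dual variables on the optional space -/

/-- `ξ̄_{t,s}(Q̄)` on the optional space. -/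
def xiBar {T : ℕ} (F : Fin (T+1) → MeasurableSpace Ω)
    (Pb Qb : @Measure (Ω × Fin (T+1)) (optSigma T F)) (t s : Fin (T+1)) :
    Ω × Fin (T+1) → ℝ :=
  fun x => if 0 < EE (optFilt T F t) Pb (rnD Pb Qb) x
    then EE (optFilt T F s) Pb (rnD Pb Qb) x / EE (optFilt T F t) Pb (rnD Pb Qb) x
    else 1

/-- `Ē^{Q̄}_t[f] = Ē_t[ξ̄_{t,T}(Q̄) f]`, the `P̄`-a.s. version of the `Q̄`-conditional
expectation on the optional space. -/
def EQbar {T : ℕ} (F : Fin (T+1) → MeasurableSpace Ω)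
    (Pb Qb : @Measure (Ω × Fin (T+1)) (optSigma T F)) (t : Fin (T+1))
    (f : Ω × Fin (T+1) → ℝ) : Ω × Fin (T+1) → ℝ :=
  EE (optFilt T F t) Pb (fun y => xiBar F Pb Qb t (Fin.last T) y * f y)

/-- The process `w̄^T_t(Q̄, w̄)`. -/
def wBarT {m0 : MeasurableSpace Ω} (T : ℕ) (F : Fin (T+1) → MeasurableSpace Ω)
    (P : @Measure Ω m0) (μ : Fin (T+1) → Ω → ℝ) {d : ℕ} (t : Fin (T+1))
    (Qb : Fin d → @Measure (Ω × Fin (T+1)) (optSigma T F))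
    (wb : Ω × Fin (T+1) → Fin d → ℝ) : Ω × Fin (T+1) → Fin d → ℝ :=
  fun x i => if x.2 < t then wb x i
    else wb (x.1, t) i * xiBar F (optMeas T F P μ) (Qb i) t (Fin.last T) x

/-- The set `W̄_t` of dual variables for risk measures for vectors on the optional
filtration. -/
def WtBar {m0 : MeasurableSpace Ω} (T : ℕ) (F : Fin (T+1) → MeasurableSpace Ω)
    (P : @Measure Ω m0) (μ : Fin (T+1) → Ω → ℝ) (d md : ℕ) (t : Fin (T+1)) :
    Set ((Fin d → @Measure (Ω × Fin (T+1)) (optSigma T F)) × (Ω × Fin (T+1) → Fin d → ℝ)) :=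
  {Qw | (∀ i, IsProbabilityMeasure (Qw.1 i) ∧ Qw.1 i ≪ optMeas T F P μ ∧
      ∀ S : Set (Ω × Fin (T+1)), MeasurableSet[optFilt T F t] S →
        Qw.1 i S = optMeas T F P μ S) ∧
    (inMstarPlus (optFilt T F t) (optMeas T F P μ) d md Qw.2 ∧
      ¬ inMperp (optFilt T F t) (optMeas T F P μ) d md Qw.2) ∧
    (∀ᵐ x ∂(optMeas T F P μ), ∀ i, 0 ≤ wBarT T F P μ t Qw.1 Qw.2 x i) ∧
    (∀ i, Integrable (fun x => wBarT T F P μ t Qw.1 Qw.2 x i) (optMeas T F P μ))}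

/-- The minimal penalty function `ᾱ_t(Q̄, w̄)` of a risk measure for vectors on the optional
filtration with acceptance set `Ab`. -/
def alphaBar {m0 : MeasurableSpace Ω} (T : ℕ) (F : Fin (T+1) → MeasurableSpace Ω)
    (P : @Measure Ω m0) (μ : Fin (T+1) → Ω → ℝ) (d md : ℕ) (t : Fin (T+1))
    (Ab : Set (Ω × Fin (T+1) → Fin d → ℝ))
    (Qb : Fin d → @Measure (Ω × Fin (T+1)) (optSigma T F))
    (wb : Ω × Fin (T+1) → Fin d → ℝ) : Set (Ω × Fin (T+1) → Fin d → ℝ) :=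
  ⋂ Y ∈ Ab,
    (({fun x i => EQbar F (optMeas T F P μ) (Qb i) t (fun y => - Y y i) x} +
        Gam (optFilt T F t) (optMeas T F P μ) d wb) ∩
      Msp (optFilt T F t) (optMeas T F P μ) d md)

/-- The dual variables `(Q̂, w) = W_t(Q ⊗ ψ, w̄)`: the measure components. -/
def hatQ {m0 : MeasurableSpace Ω} {T : ℕ} (F : Fin (T+1) → MeasurableSpace Ω)
    (P : @Measure Ω m0) (μ : Fin (T+1) → Ω → ℝ) {d : ℕ}
    (Q : Fin d → @Measure Ω m0) (ψ : Fin d → Fin (T+1) → Ω → ℝ) (t : Fin (T+1)) :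
    Fin (T+1) → Fin d → @Measure Ω m0 :=
  fun s i => P.withDensity fun ω => ENNReal.ofReal (
    if 0 < EQ F P (Q i) t (ψ i s) ω
    then ψ i s ω / EQ F P (Q i) t (ψ i s) ω * xi F P (Q i) t s ω
    else μ s ω / EE (F t) P (μ s) ω)

/-- The dual variables `(Q̂, w) = W_t(Q ⊗ ψ, w̄)`: the weight components. -/
def hatw {m0 : MeasurableSpace Ω} {T : ℕ} (F : Fin (T+1) → MeasurableSpace Ω)
    (P : @Measure Ω m0) (μ : Fin (T+1) → Ω → ℝ) {d : ℕ}
    (Q : Fin d → @Measure Ω m0) (ψ : Fin d → Fin (T+1) → Ω → ℝ) (t : Fin (T+1))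
    (wb : Ω × Fin (T+1) → Fin d → ℝ) : Fin (T+1) → Ω → Fin d → ℝ :=
  fun s ω i => EQ F P (Q i) t (ψ i s) ω / (1 - ∑ r ∈ Iio t, μ r ω) * wb (ω, t) i

/-- The weight component `w̄` of `W̄_t(Q,w) = (Q̄,w̄)`. -/
def barw (T : ℕ) {d : ℕ} (t : Fin (T+1)) (w : Fin (T+1) → Ω → Fin d → ℝ) :
    Ω × Fin (T+1) → Fin d → ℝ :=
  fun x i => if t ≤ x.2 then ∑ s ∈ Ici t, (if 0 < w s x.1 i then w s x.1 i else 0) else 0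

/-- The measure component `Q̄` of `W̄_t(Q,w) = (Q̄,w̄)`, defined via its density w.r.t. `P̄`. -/
def barQ {m0 : MeasurableSpace Ω} (T : ℕ) (F : Fin (T+1) → MeasurableSpace Ω)
    (P : @Measure Ω m0) (μ : Fin (T+1) → Ω → ℝ) {d : ℕ}
    (Q : Fin (T+1) → Fin d → @Measure Ω m0) (w : Fin (T+1) → Ω → Fin d → ℝ)
    (t : Fin (T+1)) : Fin d → @Measure (Ω × Fin (T+1)) (optSigma T F) :=
  fun i => (optMeas T F P μ).withDensity fun x => ENNReal.ofReal (
    if x.2 < t then 1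
    else ((1 - ∑ r ∈ Iio t, μ r x.1) / μ x.2 x.1) *
      (if 0 < barw T t w (x.1, t) i then w x.2 x.1 i / barw T t w (x.1, t) i else 1) *
      xi F P (Q x.2 i) t x.2 x.1)

/-! ### Auxiliary lemmas for Corollary 4.2 -/

section Aux

variable {T d : ℕ} {F : Fin (T+1) → MeasurableSpace Ω} {t s : Fin (T+1)}

/-- The idempotent time truncation map `(ω, s) ↦ (ω, min s t)`. -/
def gmap (T : ℕ) (t : Fin (T+1)) (x : Ω × Fin (T+1)) : Ω × Fin (T+1) :=
  (x.1, if t ≤ x.2 then t else x.2)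

lemma optFilt_le_comap :
    optFilt T F t ≤ MeasurableSpace.comap (gmap T t) ⊤ := by
  refine MeasurableSpace.generateFrom_le ?_
  rintro S (⟨r, hrt, A, hA, rfl⟩ | ⟨A, hA, rfl⟩)
  · refine ⟨A ×ˢ ({r} : Set (Fin (T+1))), trivial, ?_⟩
    ext ⟨ω, u⟩
    simp only [gmap, Set.mem_preimage, Set.mem_prod, Set.mem_singleton_iff]
    constructor
    · rintro ⟨h1, h2⟩
      refine ⟨h1, ?_⟩
      split_ifs at h2 with h
      · exact absurd (h2 ▸ hrt) (lt_irrefl _)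
      · exact h2
    · rintro ⟨h1, rfl⟩
      exact ⟨h1, by rw [if_neg (not_le.2 hrt)]⟩
  · refine ⟨A ×ˢ Set.Ici t, trivial, ?_⟩
    ext ⟨ω, u⟩
    simp only [gmap, Set.mem_preimage, Set.mem_prod, Set.mem_Ici]
    constructor
    · rintro ⟨h1, h2⟩
      refine ⟨h1, ?_⟩
      split_ifs at h2 with h
      · exact h
      · exact h2
    · rintro ⟨h1, h2⟩
      exact ⟨h1, by rw [if_pos h2]⟩

/-- An `F̄_t`-measurable random vector is constant in time on `𝕋_t`. -/
lemma optFilt_invariant {f : Ω × Fin (T+1) → Fin d → ℝ}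
    (hf : Measurable[optFilt T F t] f) (ω : Ω) (s : Fin (T+1)) (hts : t ≤ s) :
    f (ω, s) = f (ω, t) := by
  funext i
  have hfi : Measurable[optFilt T F t] fun x => f x i :=
    (measurable_pi_apply i).comp hf
  have hfi' : Measurable[MeasurableSpace.comap (gmap T t) ⊤] fun x => f x i :=
    hfi.mono optFilt_le_comap le_rfl
  obtain ⟨S, -, hS⟩ :=
    MeasurableSpace.measurableSet_comap.mp (hfi' (measurableSet_singleton (f (ω, t) i)))
  have e1 : gmap T t (ω, t) = (ω, t) := by simp [gmap]
  have e2 : gmap T t (ω, s) = (ω, t) := by simp [gmap, hts]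
  have h1 : (ω, t) ∈ S := by
    have ht : ((ω, t) : Ω × Fin (T+1)) ∈ (fun x => f x i) ⁻¹' {f (ω, t) i} := rfl
    rw [← hS, Set.mem_preimage, e1] at ht
    exact ht
  have h2 : ((ω, s) : Ω × Fin (T+1)) ∈ (fun x => f x i) ⁻¹' {f (ω, t) i} := by
    rw [← hS, Set.mem_preimage, e2]
    exact h1
  exact h2

lemma measurableSet_prod_singleton (hs : s < t) {A : Set Ω}
    (hA : MeasurableSet[F s] A) :
    MeasurableSet[optFilt T F t] (A ×ˢ ({s} : Set (Fin (T+1)))) :=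
  MeasurableSpace.measurableSet_generateFrom (Or.inl ⟨s, hs, A, hA, rfl⟩)

lemma measurable_embAt {v : Ω → Fin d → ℝ} (hv : Measurable[F s] v) (hs : s < t) :
    Measurable[optFilt T F t] (embAt T s v) := by
  letI : MeasurableSpace (Ω × Fin (T+1)) := optFilt T F t
  apply measurable_pi_lambda
  intro i B hB
  have hvi : Measurable[F s] fun ω => v ω i := (measurable_pi_apply i).comp hv
  by_cases h0 : (0:ℝ) ∈ B
  · have hset : (fun x : Ω × Fin (T+1) => embAt T s v x i) ⁻¹' B =
        (((fun ω => v ω i) ⁻¹' B) ×ˢ ({s} : Set (Fin (T+1)))) ∪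
          ((Set.univ ×ˢ ({s} : Set (Fin (T+1))))ᶜ) := by
      ext ⟨ω, u⟩
      simp only [embAt, Set.mem_preimage, Set.mem_union, Set.mem_prod,
        Set.mem_singleton_iff, Set.mem_compl_iff, Set.mem_univ, true_and]
      by_cases hu : u = s
      · subst hu; simp [h0]
      · simp [hu, h0]
    rw [hset]
    exact (measurableSet_prod_singleton hs (hvi hB)).union
      (measurableSet_prod_singleton hs MeasurableSet.univ).compl
  · have hset : (fun x : Ω × Fin (T+1) => embAt T s v x i) ⁻¹' B =
        ((fun ω => v ω i) ⁻¹' B) ×ˢ ({s} : Set (Fin (T+1))) := by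
      ext ⟨ω, u⟩
      simp only [embAt, Set.mem_preimage, Set.mem_prod, Set.mem_singleton_iff]
      by_cases hu : u = s
      · subst hu; simp
      · simp [hu, h0]
    rw [hset]
    exact measurableSet_prod_singleton hs (hvi hB)

lemma measurable_evalAt {X : Ω × Fin (T+1) → Fin d → ℝ}
    (hX : Measurable[optSigma T F] X) (s : Fin (T+1)) :
    Measurable[F s] (evalAt T s X) := by
  letI : MeasurableSpace Ω := F s
  have hι : @Measurable Ω (Ω × Fin (T+1)) (F s) (optSigma T F) (fun ω : Ω => (ω, s)) := by
    apply measurable_generateFrom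
    rintro S ⟨r, A, hA, rfl⟩
    by_cases hrs : r = s
    · subst hrs
      have h : (fun ω : Ω => (ω, r)) ⁻¹' (A ×ˢ ({r} : Set (Fin (T+1)))) = A := by
        ext ω; simp
      rw [h]; exact hA
    · have h : (fun ω : Ω => (ω, s)) ⁻¹' (A ×ˢ ({r} : Set (Fin (T+1)))) = ∅ := by
        ext ω
        simp only [Set.mem_preimage, Set.mem_prod, Set.mem_singleton_iff,
          Set.mem_empty_iff_false, iff_false, not_and]
        exact fun _ h => hrs h.symm
      rw [h]; exact MeasurableSet.empty
  exact hX.comp hι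

lemma measurable_snd_optSigma :
    @Measurable (Ω × Fin (T+1)) (Fin (T+1)) (optSigma T F) _ Prod.snd := by
  letI : MeasurableSpace (Ω × Fin (T+1)) := optSigma T F
  apply measurable_to_countable'
  intro r
  have h : (Prod.snd : Ω × Fin (T+1) → Fin (T+1)) ⁻¹' {r} =
      Set.univ ×ˢ ({r} : Set (Fin (T+1))) := by
    ext ⟨ω, u⟩; simp [eq_comm]
  rw [h]
  exact MeasurableSpace.measurableSet_generateFrom ⟨r, Set.univ, MeasurableSet.univ, rfl⟩

lemma measurable_cutTail {X : Ω × Fin (T+1) → Fin d → ℝ}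
    (hX : Measurable[optSigma T F] X) :
    Measurable[optSigma T F] (cutTail T t X) := by
  letI : MeasurableSpace (Ω × Fin (T+1)) := optSigma T F
  apply measurable_pi_lambda
  intro i
  have hset : MeasurableSet[optSigma T F] {x : Ω × Fin (T+1) | t ≤ x.2} := by
    have h : {x : Ω × Fin (T+1) | t ≤ x.2} = Prod.snd ⁻¹' Set.Ici t := rfl
    rw [h]
    exact measurable_snd_optSigma MeasurableSet.of_discrete
  exact Measurable.ite hset ((measurable_pi_apply i).comp hX) measurable_const

end Aux

end RMPaper
open RMPaper MeasureTheory Finset Pointwise Filter in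
/-- Corollary 4.2: in the full eligible space setting `M = ℝ^d` (i.e.
`md = d`), a time decomposable conditional risk measure for vectors on the optional
filtration satisfies `R̄_t(X) = ∑_{s<t} (-X_s + C_s) 1_{{s}} + ρ_t(π_{t,T}(X)) 1_{𝕋_t}`
with `C_s = R̄_t(0)_s` and `ρ_t(Y) = R̄_t(Y 1_{𝕋_t})_t`. -/
theorem full_eligible_space_decomposition
    {Ω : Type} [m0 : MeasurableSpace Ω] (P : Measure Ω) [IsProbabilityMeasure P]
    (T : ℕ) (F : Fin (T+1) → MeasurableSpace Ω)
    (hFmono : Monotone F) (hFle : ∀ r, F r ≤ m0) (hFT : F (Fin.last T) = m0)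
    (hF0 : ∀ A : Set Ω, MeasurableSet[F 0] A → P A = 0 ∨ P A = 1)
    (μ : Fin (T+1) → Ω → ℝ) (hμa : ∀ r, Measurable[F r] (μ r))
    (hμs : ∀ᵐ ω ∂P, ∑ r, μ r ω = 1)
    (hμp : ∃ ε > 0, ∀ᵐ ω ∂P, ∀ r, ε < μ r ω)
    (d : ℕ) (hd : 1 ≤ d)
    (t : Fin (T+1))
    (Rb : (Ω × Fin (T+1) → Fin d → ℝ) → Set (Ω × Fin (T+1) → Fin d → ℝ))
    (hRb : IsCRMv (optSigma T F) (optFilt T F t) (optMeas T F P μ) d d Rb)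
    (hTD : TimeDecomp T F t Rb) :
    ∀ X ∈ Linf (optSigma T F) d,
      Rb X = (∑ s ∈ Iio t, (embAt T s) ''
          ((fun c : Ω → Fin d → ℝ => fun ω i => - X (ω, s) i + c ω i) ''
            (evalAt T s '' Rb 0))) +
        (embTail T t) '' barToProc T t Rb (procOf T t X) := by
  rintro X ⟨hXm, CX, hCX⟩
  rw [hTD X ⟨hXm, CX, hCX⟩]
  congr 1
  · -- the time-`s` terms, `s < t`
    apply Finset.sum_congr rfl
    intro s hs
    have hst : s < t := Finset.mem_Iio.mp hs
    have hmmeq : cutAt T s X = embAt T s (evalAt T s X) := by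
      funext x i
      obtain ⟨ω, r⟩ := x
      simp only [cutAt, embAt, evalAt]
      by_cases h : r = s
      · subst h; rfl
      · rw [if_neg h, if_neg h]
    have hvmeas : Measurable[F s] (evalAt T s X) := measurable_evalAt hXm s
    have hmmMeas : Measurable[optFilt T F t] (cutAt T s X) := by
      rw [hmmeq]; exact measurable_embAt hvmeas hst
    have hmmMsp : cutAt T s X ∈ Msp (optFilt T F t) (optMeas T F P μ) d d := by
      refine ⟨⟨hmmMeas, CX, fun x i => ?_⟩, ae_of_all _ fun x i hi => ?_⟩
      · simp only [cutAt]
        split_ifs with h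
        · exact hCX x i
        · rw [abs_zero]; exact (abs_nonneg _).trans (hCX x i)
      · exact absurd hi (Nat.not_le.2 i.isLt)
    have h0 : (0 : Ω × Fin (T+1) → Fin d → ℝ) ∈ Linf (optSigma T F) d :=
      ⟨measurable_const, 0, fun x i => by simp⟩
    have hci := hRb.2.1 0 h0 (cutAt T s X) hmmMsp
    rw [zero_add] at hci
    rw [hci, Set.image_image, Set.image_image, Set.image_image]
    apply Set.image_congr'
    intro u
    funext x i
    obtain ⟨ω, r⟩ := x
    simp only [cutAt, embAt, evalAt, Pi.sub_apply]
    by_cases h : r = s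
    · subst h
      rw [if_pos rfl, if_pos rfl, if_pos rfl]
      exact sub_eq_neg_add _ _
    · rw [if_neg h, if_neg h]
  · -- the tail term
    have hEq : embProc T t (procOf T t X) = cutTail T t X := by
      funext x i
      obtain ⟨ω, r⟩ := x
      simp only [embProc, procOf, cutTail]
      by_cases h : t ≤ r
      · rw [if_pos h, if_pos h]
      · rw [if_neg h, if_neg h]
    have hLinf : cutTail T t X ∈ Linf (optSigma T F) d := by
      refine ⟨measurable_cutTail hXm, CX, fun x i => ?_⟩
      simp only [cutTail]
      split_ifs with h
      · exact hCX x i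
      · rw [abs_zero]; exact (abs_nonneg _).trans (hCX x i)
    have hsub := (hRb.1 (cutTail T t X) hLinf).1
    rw [barToProc, hEq, Set.image_image]
    apply Set.image_congr
    intro u hu
    have humeas : Measurable[optFilt T F t] u := (hsub hu).1.1
    funext x i
    obtain ⟨ω, r⟩ := x
    simp only [embTail, evalAt, cutTail]
    by_cases h : t ≤ r
    · rw [if_pos h, if_pos h]
      rw [optFilt_invariant humeas ω r h]
    · rw [if_neg h, if_neg h]
end
end

section
/- Let (ρ_t,(R^t_s)_{s=0}^{t−1})_{t∈𝕋} be a jointly multiportfolio time consistent pair of a dynamic risk measure for processes and associated families of conditional risk measures for vectors on L^∞_s(ℝ^d). For each t∈𝕋 define R̄_t(X):=∑_{s=0}^{t−1}R^t_s(X_s)1_{{s}}+ρ_t(π_{t,T}(X))1_{𝕋_t} for X∈L̄^∞(ℝ^d). Then the resulting time decomposable dynamic risk measure for vectors (R̄_t)_{t∈𝕋} on the optional filtration is multiportfolio time consistent. -/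
open MeasureTheory Finset Pointwise Filter

noncomputable section

section JMPTCauxSection
namespace JMPTCaux
open RMPaper

variable {Ω : Type*} {T d : ℕ}

/-- image of a Minkowski sum under an additive map -/
theorem image_setAdd {α β : Type*} [AddCommMonoid α] [AddCommMonoid β] (f : α → β)
    (hf : ∀ a b, f (a + b) = f a + f b) (s t : Set α) : f '' (s + t) = f '' s + f '' t := by
  ext x
  simp only [Set.mem_image, Set.mem_add]
  constructor
  · rintro ⟨y, ⟨a, ha, b, hb, rfl⟩, rfl⟩
    exact ⟨f a, ⟨a, ha, rfl⟩, f b, ⟨b, hb, rfl⟩, (hf a b).symm⟩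
  · rintro ⟨_, ⟨a, ha, rfl⟩, _, ⟨b, hb, rfl⟩, rfl⟩
    exact ⟨a + b, ⟨a, ha, b, hb, rfl⟩, hf a b⟩

theorem image_setSum {ι α β : Type*} [AddCommMonoid α] [AddCommMonoid β] (f : α → β)
    (hf0 : f 0 = 0) (hf : ∀ a b, f (a + b) = f a + f b) (I : Finset ι) (S : ι → Set α) :
    f '' (∑ i ∈ I, S i) = ∑ i ∈ I, f '' S i := by
  classical
  induction I using Finset.induction_on with
  | empty =>
      simp only [Finset.sum_empty, ← Set.singleton_zero, Set.image_singleton, hf0]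
  | insert _ _ h ih =>
      rw [Finset.sum_insert h, Finset.sum_insert h, image_setAdd f hf, ih]

/-- evaluation of a slot sum -/
theorem sum_embAt_apply (t : Fin (T+1)) (a : Fin (T+1) → Ω → Fin d → ℝ)
    (x : Ω × Fin (T+1)) (i : Fin d) :
    (∑ r ∈ Iio t, embAt T r (a r)) x i = if x.2 < t then a x.2 x.1 i else 0 := by
  rw [Finset.sum_apply, Finset.sum_apply]
  simp only [embAt]
  rw [Finset.sum_ite_eq (Iio t) x.2 (fun r => a r x.1 i)]
  simp [Finset.mem_Iio]

/-- canonical-form membership in a slot-decomposed set -/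
theorem mem_slots {t : Fin (T+1)} {A : Fin (T+1) → Set (Ω → Fin d → ℝ)}
    {Bs : Set (Ω → Fin d → ℝ)} {u : Ω × Fin (T+1) → Fin d → ℝ} :
    u ∈ (∑ r ∈ Iio t, embAt T r '' A r) + embTail T t '' Bs ↔
    ∃ (a : Fin (T+1) → Ω → Fin d → ℝ) (v : Ω → Fin d → ℝ),
      (∀ r, r < t → a r ∈ A r) ∧ v ∈ Bs ∧
      ∀ x i, u x i = if x.2 < t then a x.2 x.1 i else v x.1 i := by
  classical
  constructor
  · intro hu
    rcases Set.mem_add.1 hu with ⟨p, hp, q, hq, hpq⟩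
    rcases (Set.mem_finset_sum _ _ _).1 hp with ⟨g, hg, hgp⟩
    rcases hq with ⟨v, hv, hqv⟩
    have hch : ∀ r, ∃ w, r < t → w ∈ A r ∧ embAt T r w = g r := by
      intro r
      by_cases hr : r < t
      · rcases hg (Finset.mem_Iio.2 hr) with ⟨w, hw, hwr⟩
        exact ⟨w, fun _ => ⟨hw, hwr⟩⟩
      · exact ⟨0, fun h => absurd h hr⟩
    choose a haa using hch
    refine ⟨a, v, fun r hr => (haa r hr).1, hv, ?_⟩
    intro x i
    have hp' : p = ∑ r ∈ Iio t, embAt T r (a r) := by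
      rw [← hgp]
      exact Finset.sum_congr rfl fun r hr => ((haa r (Finset.mem_Iio.1 hr)).2).symm
    have hux : u x i = p x i + q x i := by rw [← hpq]; rfl
    rw [hux, hp', sum_embAt_apply, ← hqv]
    by_cases h : x.2 < t
    · simp [embTail, h, not_le.2 h]
    · simp [embTail, h, not_lt.1 h]
  · rintro ⟨a, v, ha, hv, hu⟩
    have hp : (∑ r ∈ Iio t, embAt T r (a r)) ∈ ∑ r ∈ Iio t, embAt T r '' A r :=
      Set.finset_sum_mem_finset_sum _ _ _ fun r hr =>
        Set.mem_image_of_mem _ (ha r (Finset.mem_Iio.1 hr))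
    have hq : embTail T t v ∈ embTail T t '' Bs := Set.mem_image_of_mem _ hv
    have : u = (∑ r ∈ Iio t, embAt T r (a r)) + embTail T t v := by
      funext x i
      have : ((∑ r ∈ Iio t, embAt T r (a r)) + embTail T t v) x i
          = (∑ r ∈ Iio t, embAt T r (a r)) x i + embTail T t v x i := rfl
      rw [this, sum_embAt_apply, hu x i]
      by_cases h : x.2 < t
      · simp [embTail, h, not_le.2 h]
      · simp [embTail, h, not_lt.1 h]
    rw [this]
    exact Set.add_mem_add hp hq

theorem mem_buildBar {t : Fin (T+1)} {Rv : Fin (T+1) → (Ω → Fin d → ℝ) → Set (Ω → Fin d → ℝ)}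
    {ρ : (Fin (T+1) → Ω → Fin d → ℝ) → Set (Ω → Fin d → ℝ)}
    {X u : Ω × Fin (T+1) → Fin d → ℝ} :
    u ∈ buildBar T t Rv ρ X ↔
    ∃ (a : Fin (T+1) → Ω → Fin d → ℝ) (v : Ω → Fin d → ℝ),
      (∀ r, r < t → a r ∈ Rv r (evalAt T r X)) ∧ v ∈ ρ (procOf T t X) ∧
      ∀ x i, u x i = if x.2 < t then a x.2 x.1 i else v x.1 i :=
  mem_slots

/-- measurability of the slice embedding into the optional σ-algebra -/
theorem measurable_pair (F : Fin (T+1) → MeasurableSpace Ω) (r : Fin (T+1)) :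
    @Measurable Ω (Ω × Fin (T+1)) (F r) (optSigma T F) (fun ω => (ω, r)) := by
  letI := F r
  apply measurable_generateFrom
  rintro S ⟨t', A, hA, rfl⟩
  by_cases h : r = t'
  · subst h
    have : (fun ω : Ω => (ω, r)) ⁻¹' (A ×ˢ ({r} : Set (Fin (T+1)))) = A := by
      ext ω; simp
    rw [this]; exact hA
  · have : (fun ω : Ω => (ω, r)) ⁻¹' (A ×ˢ ({t'} : Set (Fin (T+1)))) = ∅ := by
      ext ω
      simp only [Set.mem_preimage, Set.mem_prod, Set.mem_singleton_iff, Set.mem_empty_iff_false, iff_false, not_and]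
      exact fun _ ht => h ht
    rw [this]; exact MeasurableSet.empty

theorem evalAt_mem_Linf {F : Fin (T+1) → MeasurableSpace Ω}
    {X : Ω × Fin (T+1) → Fin d → ℝ} (hX : X ∈ Linf (optSigma T F) d) (r : Fin (T+1)) :
    evalAt T r X ∈ Linf (F r) d := by
  obtain ⟨hm, C, hC⟩ := hX
  exact ⟨hm.comp (measurable_pair F r), C, fun ω i => hC (ω, r) i⟩

theorem procOf_mem_procSp {F : Fin (T+1) → MeasurableSpace Ω}
    {X : Ω × Fin (T+1) → Fin d → ℝ} (hX : X ∈ Linf (optSigma T F) d) (t : Fin (T+1)) :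
    procOf T t X ∈ procSp T F d t := by
  obtain ⟨hm, C, hC⟩ := hX
  refine ⟨?_, ⟨max C 0, ?_⟩, ?_⟩
  · intro s
    by_cases h : t ≤ s
    · have : procOf T t X s = evalAt T s X := by
        funext ω i; simp [procOf, evalAt, h]
      rw [this]
      exact hm.comp (measurable_pair F s)
    · have : procOf T t X s = 0 := by funext ω i; simp [procOf, h]
      rw [this]; exact measurable_const
  · intro s ω i
    by_cases h : t ≤ s
    · simp only [procOf, if_pos h]
      exact le_trans (hC (ω, s) i) (le_max_left _ _)
    · simp [procOf, h]
  · intro s hs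
    funext ω i; simp [procOf, not_le.2 hs]

end JMPTCaux

namespace JMPTCaux
open RMPaper

variable {Ω : Type*} {T d : ℕ}

theorem timeDecomp_buildBar (t : Fin (T+1))
    (Rv : Fin (T+1) → (Ω → Fin d → ℝ) → Set (Ω → Fin d → ℝ))
    (ρ : (Fin (T+1) → Ω → Fin d → ℝ) → Set (Ω → Fin d → ℝ))
    (hRne : ∀ r, r < t → (Rv r 0).Nonempty) (hρne : (ρ 0).Nonempty)
    (X : Ω × Fin (T+1) → Fin d → ℝ) :
    buildBar T t Rv ρ X =
      (∑ s ∈ Iio t, cutAt T s '' buildBar T t Rv ρ (cutAt T s X)) +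
        cutTail T t '' buildBar T t Rv ρ (cutTail T t X) := by
  classical
  have h1 : ∀ s ∈ Iio t,
      cutAt T s '' buildBar T t Rv ρ (cutAt T s X) = embAt T s '' Rv s (evalAt T s X) := by
    intro s hs
    have hst : s < t := Finset.mem_Iio.1 hs
    have hcadd : ∀ u v : Ω × Fin (T+1) → Fin d → ℝ,
        cutAt T s (u + v) = cutAt T s u + cutAt T s v := by
      intro u v; funext x i
      by_cases h : x.2 = s <;> simp [cutAt, h]
    have hc0 : cutAt T s (0 : Ω × Fin (T+1) → Fin d → ℝ) = 0 := by
      funext x i; simp [cutAt]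
    have hρ0 : procOf T t (cutAt T s X) = 0 := by
      funext r ω i
      simp only [procOf, cutAt, Pi.zero_apply]
      by_cases h : t ≤ r
      · have hrs : r ≠ s := fun he => absurd (he ▸ h) (not_le.2 hst)
        simp [h, hrs]
      · simp [h]
    have htail0 : cutAt T s '' (embTail T t '' ρ (procOf T t (cutAt T s X))) = 0 := by
      rw [hρ0, Set.image_image]
      have heq : (fun v => cutAt T s (embTail T t v)) =
          fun _ : Ω → Fin d → ℝ => (0 : Ω × Fin (T+1) → Fin d → ℝ) := by
        funext v x i
        by_cases h : x.2 = s
        · simp [cutAt, embTail, h, not_le.2 hst]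
        · simp [cutAt, h]
      rw [heq, hρne.image_const, Set.singleton_zero]
    have hmain : ∀ r ∈ Iio t, r ≠ s →
        cutAt T s '' (embAt T r '' Rv r (evalAt T r (cutAt T s X))) = 0 := by
      intro r hr hrs
      have hev : evalAt T r (cutAt T s X) = 0 := by
        funext ω i; simp [evalAt, cutAt, hrs]
      rw [hev, Set.image_image]
      have heq : (fun w => cutAt T s (embAt T r w)) =
          fun _ : Ω → Fin d → ℝ => (0 : Ω × Fin (T+1) → Fin d → ℝ) := by
        funext w x i
        by_cases h : x.2 = s
        · simp [cutAt, embAt, h, Ne.symm hrs]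
        · simp [cutAt, h]
      rw [heq, (hRne r (Finset.mem_Iio.1 hr)).image_const, Set.singleton_zero]
    have hss : cutAt T s '' (embAt T s '' Rv s (evalAt T s (cutAt T s X))) =
        embAt T s '' Rv s (evalAt T s X) := by
      have hev : evalAt T s (cutAt T s X) = evalAt T s X := by
        funext ω i; simp [evalAt, cutAt]
      rw [hev, Set.image_image]
      have heq : (fun w : Ω → Fin d → ℝ => cutAt T s (embAt T s w)) = (embAt T s : (Ω → Fin d → ℝ) → Ω × Fin (T+1) → Fin d → ℝ) := by
        funext w x i
        by_cases h : x.2 = s <;> simp [cutAt, embAt, h]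
      rw [heq]
    calc cutAt T s '' buildBar T t Rv ρ (cutAt T s X)
        = (∑ r ∈ Iio t, cutAt T s '' (embAt T r '' Rv r (evalAt T r (cutAt T s X)))) +
            cutAt T s '' (embTail T t '' ρ (procOf T t (cutAt T s X))) := by
          simp only [buildBar]
          rw [image_setAdd _ hcadd, image_setSum _ hc0 hcadd]
      _ = embAt T s '' Rv s (evalAt T s X) := by
          rw [htail0, add_zero, Finset.sum_eq_single_of_mem s hs hmain, hss]
  have h2 : cutTail T t '' buildBar T t Rv ρ (cutTail T t X) =
      embTail T t '' ρ (procOf T t X) := by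
    have htadd : ∀ u v : Ω × Fin (T+1) → Fin d → ℝ,
        cutTail T t (u + v) = cutTail T t u + cutTail T t v := by
      intro u v; funext x i
      by_cases h : t ≤ x.2 <;> simp [cutTail, h]
    have ht0 : cutTail T t (0 : Ω × Fin (T+1) → Fin d → ℝ) = 0 := by
      funext x i; simp [cutTail]
    have hproc : procOf T t (cutTail T t X) = procOf T t X := by
      funext r ω i
      by_cases h : t ≤ r <;> simp [procOf, cutTail, h]
    have hAt0 : ∀ r ∈ Iio t,
        cutTail T t '' (embAt T r '' Rv r (evalAt T r (cutTail T t X))) = 0 := by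
      intro r hr
      have hrt : r < t := Finset.mem_Iio.1 hr
      have hev : evalAt T r (cutTail T t X) = 0 := by
        funext ω i; simp [evalAt, cutTail, not_le.2 hrt]
      rw [hev, Set.image_image]
      have heq : (fun w => cutTail T t (embAt T r w)) =
          fun _ : Ω → Fin d → ℝ => (0 : Ω × Fin (T+1) → Fin d → ℝ) := by
        funext w x i
        by_cases h : t ≤ x.2
        · have h2 : x.2 ≠ r := fun he => absurd (he ▸ h) (not_le.2 hrt)
          simp [cutTail, embAt, h, h2]
        · simp [cutTail, h]
      rw [heq, (hRne r hrt).image_const, Set.singleton_zero]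
    have htt : cutTail T t '' (embTail T t '' ρ (procOf T t X)) =
        embTail T t '' ρ (procOf T t X) := by
      rw [Set.image_image]
      have heq : (fun v : Ω → Fin d → ℝ => cutTail T t (embTail T t v)) = (embTail T t : (Ω → Fin d → ℝ) → Ω × Fin (T+1) → Fin d → ℝ) := by
        funext v x i
        by_cases h : t ≤ x.2 <;> simp [cutTail, embTail, h]
      rw [heq]
    calc cutTail T t '' buildBar T t Rv ρ (cutTail T t X)
        = (∑ r ∈ Iio t, cutTail T t '' (embAt T r '' Rv r (evalAt T r (cutTail T t X)))) +
            cutTail T t '' (embTail T t '' ρ (procOf T t (cutTail T t X))) := by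
          simp only [buildBar]
          rw [image_setAdd _ htadd, image_setSum _ ht0 htadd]
      _ = embTail T t '' ρ (procOf T t X) := by
          rw [Finset.sum_congr rfl hAt0, Finset.sum_const_zero, zero_add, hproc, htt]
  rw [Finset.sum_congr rfl h1, h2]
  rfl

end JMPTCaux
end JMPTCauxSection


open RMPaper MeasureTheory Finset Pointwise Filter in
/-- Theorem 4.5(1): a jointly multiportfolio time consistent pair
`(ρ_t, (R^t_s)_{s<t})_{t∈𝕋}` induces, via
`R̄_t(X) = ∑_{s<t} R^t_s(X_s) 1_{{s}} + ρ_t(π_{t,T}(X)) 1_{𝕋_t}`, a time decomposable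
dynamic risk measure for vectors on the optional filtration which is multiportfolio time
consistent. -/
theorem joint_mptc_implies_optional_mptc
    {Ω : Type} [m0 : MeasurableSpace Ω] (P : Measure Ω) [IsProbabilityMeasure P]
    (T : ℕ) (F : Fin (T+1) → MeasurableSpace Ω)
    (hFmono : Monotone F) (hFle : ∀ r, F r ≤ m0) (hFT : F (Fin.last T) = m0)
    (hF0 : ∀ A : Set Ω, MeasurableSet[F 0] A → P A = 0 ∨ P A = 1)
    (μ : Fin (T+1) → Ω → ℝ) (hμa : ∀ r, Measurable[F r] (μ r))
    (hμs : ∀ᵐ ω ∂P, ∑ r, μ r ω = 1)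
    (hμp : ∃ ε > 0, ∀ᵐ ω ∂P, ∀ r, ε < μ r ω)
    (d md : ℕ) (hmd1 : 1 ≤ md) (hmdd : md ≤ d)
    (ρ : Fin (T+1) → (Fin (T+1) → Ω → Fin d → ℝ) → Set (Ω → Fin d → ℝ))
    (R : Fin (T+1) → Fin (T+1) → (Ω → Fin d → ℝ) → Set (Ω → Fin d → ℝ))
    (hρ : ∀ t, IsCRMp T F P d md t (ρ t))
    (hR : ∀ t s : Fin (T+1), s < t → IsCRMv (F s) (F s) P d md (R t s))
    (hJ : JointMPTC T F d ρ R) :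
    (∀ t, TimeDecomp T F t (buildBar T t (R t) (ρ t))) ∧
    MPTCv T F (fun t => buildBar T t (R t) (ρ t)) := by
  constructor
  · intro t X _hX
    exact JMPTCaux.timeDecomp_buildBar t (R t) (ρ t)
      (fun r hr => ((hR t r hr).2.2.2).1) ((hρ t).2.2.2.1) X
  · intro t s hts X hX Br hBr Bs hBs H
    classical
    have hXrL : ∀ r, evalAt T r X ∈ Linf (F r) d := fun r => JMPTCaux.evalAt_mem_Linf hX r
    have hprocS : procOf T s X ∈ procSp T F d s := JMPTCaux.procOf_mem_procSp hX s
    have hprocT : procOf T t X ∈ procSp T F d t := JMPTCaux.procOf_mem_procSp hX t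
    have hargX : (fun (r : Fin (T+1)) (ω : Ω) (i : Fin d) =>
        (if t ≤ r ∧ r < s then procOf T t X r ω i else 0) +
        (if s ≤ r then procOf T s X r ω i else 0)) = procOf T t X := by
      funext r ω i
      by_cases h1 : s ≤ r
      · have h2 : t ≤ r := le_trans (le_of_lt hts) h1
        have h3 : ¬ r < s := not_lt.2 h1
        simp [procOf, h1, h2, h3]
      · by_cases h2 : t ≤ r
        · simp [procOf, h1, h2, not_le.1 h1]
        · simp [procOf, h1, h2]
    have hargX2 : (fun (r : Fin (T+1)) (ω : Ω) (i : Fin d) =>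
        (if t ≤ r ∧ r < s then evalAt T r X ω i else 0) +
        (if s ≤ r then procOf T s X r ω i else 0)) = procOf T t X := by
      funext r ω i
      by_cases h1 : s ≤ r
      · have h2 : t ≤ r := le_trans (le_of_lt hts) h1
        have h3 : ¬ r < s := not_lt.2 h1
        simp [procOf, evalAt, h1, h2, h3]
      · by_cases h2 : t ≤ r
        · simp [procOf, evalAt, h1, h2, not_le.1 h1]
        · simp [procOf, evalAt, h1, h2]
    by_cases hne : (∀ r, r < s → (R s r (evalAt T r X)).Nonempty) ∧
        (ρ s (procOf T s X)).Nonempty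
    · obtain ⟨hne1, hne2⟩ := hne
      have hch : ∀ r, ∃ w, r < s → w ∈ R s r (evalAt T r X) := by
        intro r
        by_cases h : r < s
        · exact ⟨(hne1 r h).choose, fun _ => (hne1 r h).choose_spec⟩
        · exact ⟨0, fun hh => absurd hh h⟩
      choose w hw using hch
      obtain ⟨v0, hv0⟩ := hne2
      have hkey : ∀ (a : Fin (T+1) → Ω → Fin d → ℝ) (v : Ω → Fin d → ℝ),
          (∀ r, r < s → a r ∈ R s r (evalAt T r X)) → v ∈ ρ s (procOf T s X) →
          ∃ b : Fin (T+1) → Ω → Fin d → ℝ, ∃ bs ∈ Bs, (∀ r, r < s → b r ∈ Br r) ∧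
            (∀ r, r < s → a r ∈ R s r (b r)) ∧ v ∈ ρ s bs := by
        intro a v haa hvv
        have hu : (fun (x : Ω × Fin (T+1)) i => if x.2 < s then a x.2 x.1 i else v x.1 i)
            ∈ buildBar T s (R s) (ρ s) X :=
          JMPTCaux.mem_buildBar.2 ⟨a, v, haa, hvv, fun x i => rfl⟩
        rcases Set.mem_iUnion₂.1 (H hu) with ⟨Y, hY, hmem⟩
        obtain ⟨b, bs, hbs, hb, rfl⟩ := hY
        obtain ⟨a', v', ha', hv', heq'⟩ := JMPTCaux.mem_buildBar.1 hmem
        have hveq : v = v' := by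
          funext ω i
          have h1 := heq' (ω, s) i
          simpa [lt_irrefl] using h1
        have haeq : ∀ r, r < s → a r = a' r := by
          intro r hr
          funext ω i
          have h1 := heq' (ω, r) i
          simpa [hr] using h1
        have hbsproc : procOf T s (fun x i => (if x.2 < s then b x.2 x.1 i else 0) +
            (if s ≤ x.2 then bs x.2 x.1 i else 0)) = bs := by
          funext r ω i
          by_cases h : s ≤ r
          · simp [procOf, h, not_lt.2 h]
          · have hz : bs r = 0 := (hBs hbs).2.2 r (not_le.1 h)
            simp [procOf, h, hz]
        have hbe : ∀ r, r < s → evalAt T r (fun x i => (if x.2 < s then b x.2 x.1 i else 0) +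
            (if s ≤ x.2 then bs x.2 x.1 i else 0)) = b r := by
          intro r hr
          funext ω i
          simp [evalAt, hr, not_le.2 hr]
        refine ⟨b, bs, hbs, hb, ?_, ?_⟩
        · intro r hr
          rw [haeq r hr]
          have h2 := ha' r hr
          rwa [hbe r hr] at h2
        · rw [hveq]
          have h2 := hv'
          rwa [hbsproc] at h2
      have hc : ρ s (procOf T s X) ⊆ ⋃ bs ∈ Bs, ρ s bs := by
        intro v hv
        obtain ⟨b, bs, hbs, _, _, hvbs⟩ := hkey w v (fun r hr => hw r hr) hv
        exact Set.mem_biUnion hbs hvbs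
      have hab : ∀ r0, r0 < s → R s r0 (evalAt T r0 X) ⊆ ⋃ b ∈ Br r0, R s r0 b := by
        intro r0 hr0 u0 hu0
        obtain ⟨b, bs, hbs, hbB, hss, _⟩ := hkey (fun r => if r = r0 then u0 else w r) v0
          (fun r hr => by
            by_cases h : r = r0
            · subst h; simpa using hu0
            · simpa [h] using hw r hr) hv0
        have h2 := hss r0 hr0
        simp only [if_pos rfl] at h2
        exact Set.mem_biUnion (hbB r0 hr0) h2
      intro u hu
      obtain ⟨a, v, ha, hv, hequ⟩ := JMPTCaux.mem_buildBar.1 hu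
      have hch2 : ∀ r, ∃ b, r < t → b ∈ Br r ∧ a r ∈ R t r b := by
        intro r
        by_cases hr : r < t
        · have h3 := hJ.2.2 r t s hr hts (evalAt T r X) (hXrL r) (Br r)
            (hBr r (lt_trans hr hts)) (hab r (lt_trans hr hts))
          rcases Set.mem_iUnion₂.1 (h3 (ha r hr)) with ⟨b, hbB, hmem⟩
          exact ⟨b, fun _ => ⟨hbB, hmem⟩⟩
        · exact ⟨0, fun h => absurd h hr⟩
      choose bb1 hbb1 using hch2
      have hMP := hJ.1 t s hts (procOf T s X) hprocS (procOf T t X) hprocT Bs hBs hc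
      rw [hargX] at hMP
      rcases Set.mem_iUnion₂.1 (hMP hv) with ⟨bs, hbsB, hv2⟩
      have hII := hJ.2.1 t s hts (fun r => evalAt T r X) (fun r _ _ => hXrL r) Br
        (fun r _ hr => hBr r hr) bs (hBs hbsB) (fun r _ hr => hab r hr)
      have hargY : (fun (r : Fin (T+1)) (ω : Ω) (i : Fin d) =>
          (if t ≤ r ∧ r < s then procOf T t X r ω i else 0) +
          (if s ≤ r then bs r ω i else 0)) = (fun r ω i =>
          (if t ≤ r ∧ r < s then evalAt T r X ω i else 0) +
          (if s ≤ r then bs r ω i else 0)) := by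
        funext r ω i
        by_cases h : t ≤ r ∧ r < s
        · simp [procOf, evalAt, h, h.1]
        · simp [h]
      rw [hargY] at hv2
      rcases Set.mem_iUnion.1 (hII hv2) with ⟨Yr, hYr2⟩
      rcases Set.mem_iUnion.1 hYr2 with ⟨hYrB, hv3⟩
      set bfin : Fin (T+1) → Ω → Fin d → ℝ := fun r => if r < t then bb1 r else Yr r
        with hbfin
      set Y : Ω × Fin (T+1) → Fin d → ℝ := fun x i =>
        (if x.2 < s then bfin x.2 x.1 i else 0) + (if s ≤ x.2 then bs x.2 x.1 i else 0)
        with hYdef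
      have hYtup : Y ∈ tupleSet T s Br Bs := by
        refine ⟨bfin, bs, hbsB, ?_, hYdef⟩
        intro r hr
        by_cases h : r < t
        · simpa [hbfin, h] using (hbb1 r h).1
        · simpa [hbfin, h] using hYrB r (not_lt.1 h) hr
      refine Set.mem_biUnion hYtup ?_
      apply JMPTCaux.mem_buildBar.2
      refine ⟨a, v, ?_, ?_, hequ⟩
      · intro r hr
        have hev : evalAt T r Y = bb1 r := by
          funext ω i
          have h1 : r < s := lt_trans hr hts
          simp [hYdef, hbfin, evalAt, h1, not_le.2 h1, hr]
        rw [hev]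
        exact (hbb1 r hr).2
      · have hproc : procOf T t Y = (fun (r : Fin (T+1)) (ω : Ω) (i : Fin d) =>
            (if t ≤ r ∧ r < s then Yr r ω i else 0) + (if s ≤ r then bs r ω i else 0)) := by
          funext r ω i
          by_cases h1 : t ≤ r
          · by_cases h2 : r < s
            · have h3 : ¬ s ≤ r := not_le.2 h2
              have h4 : ¬ r < t := not_lt.2 h1
              simp [procOf, hYdef, hbfin, h1, h2, h3, h4]
            · have h3 : s ≤ r := not_lt.1 h2
              simp [procOf, hYdef, h1, h2, h3]
          · have h2 : ¬ s ≤ r := fun hh => h1 (le_trans (le_of_lt hts) hh)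
            simp [procOf, h1, h2]
        rw [hproc]
        exact hv3
    · intro u hu
      exfalso
      obtain ⟨a, v, ha, hv, hequ⟩ := JMPTCaux.mem_buildBar.1 hu
      rw [not_and_or] at hne
      rcases hne with hne | hne
      · push_neg at hne
        obtain ⟨r0, hr0s, hr0e⟩ := hne
        have hE : R s r0 (evalAt T r0 X) = ∅ := hr0e
        rcases lt_or_ge r0 t with hr0t | htr0
        · have h3 := hJ.2.2 r0 t s hr0t hts (evalAt T r0 X) (hXrL r0) ∅
            (Set.empty_subset _) (by rw [hE]; simp)
          have h4 := h3 (ha r0 hr0t)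
          simpa using h4
        · set Br' : Fin (T+1) → Set (Ω → Fin d → ℝ) :=
            fun r => if r = r0 then ∅ else {evalAt T r X} with hBr'
          have hBr'L : ∀ r, t ≤ r → r < s → Br' r ⊆ Linf (F r) d := by
            intro r _ _ x hx
            by_cases h : r = r0
            · simp [hBr', h] at hx
            · simp only [hBr', if_neg h, Set.mem_singleton_iff] at hx
              rw [hx]; exact hXrL r
          have hhyp : ∀ r, t ≤ r → r < s →
              R s r (evalAt T r X) ⊆ ⋃ Y ∈ Br' r, R s r Y := by
            intro r _ _
            by_cases h : r = r0
            · subst h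
              rw [hE]
              exact Set.empty_subset _
            · simp only [hBr', if_neg h, Set.biUnion_singleton]
              exact fun z hz => hz
          have hII := hJ.2.1 t s hts (fun r => evalAt T r X) (fun r _ _ => hXrL r) Br'
            hBr'L (procOf T s X) hprocS hhyp
          rw [hargX2] at hII
          have h4 := hII hv
          rcases Set.mem_iUnion.1 h4 with ⟨Yr, hYr⟩
          rcases Set.mem_iUnion.1 hYr with ⟨hYrB, _⟩
          have h5 := hYrB r0 htr0 hr0s
          simp [hBr'] at h5
      · have hE : ρ s (procOf T s X) = ∅ := Set.not_nonempty_iff_eq_empty.1 hne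
        have hMP := hJ.1 t s hts (procOf T s X) hprocS (procOf T t X) hprocT ∅
          (Set.empty_subset _) (by rw [hE]; simp)
        rw [hargX] at hMP
        have h4 := hMP hv
        simpa using h4
end
end

section
/- Let (R̄_t)_{t∈𝕋} be a multiportfolio time consistent, time decomposable dynamic risk measure for vectors on the optional filtration, and define ρ_t(Y):=R̄_t(Y1_{𝕋_t})_t for Y∈R^{∞,d}_t and R^t_s(Z):=R̄_t(Z1_{{s}})_s for Z∈L^∞_s(ℝ^d), s=0,…,t−1, for each t∈𝕋. Then the pair (ρ_t,(R^t_s)_{s=0}^{t−1})_{t∈𝕋} is jointly multiportfolio time consistent. -/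
open MeasureTheory Finset Pointwise Filter

noncomputable section

namespace RMPaperAux
open RMPaper

variable {Ω : Type*} {T d : ℕ} {F : Fin (T+1) → MeasurableSpace Ω}

/-- A function with measurable slices is measurable w.r.t. the optional σ-algebra. -/
lemma measurable_opt_of_slices {f : Ω × Fin (T+1) → Fin d → ℝ}
    (h : ∀ r, Measurable[F r] fun ω => f (ω, r)) : Measurable[optSigma T F] f := by
  intro S hS
  have hEq : f ⁻¹' S = ⋃ r, ((fun ω => f (ω, r)) ⁻¹' S) ×ˢ ({r} : Set (Fin (T+1))) := by
    ext ⟨ω, r⟩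
    simp only [Set.mem_preimage, Set.mem_iUnion, Set.mem_prod, Set.mem_singleton_iff]
    constructor
    · intro hx; exact ⟨r, hx, rfl⟩
    · rintro ⟨r', hx, rfl⟩; exact hx
  rw [hEq]
  exact MeasurableSet.iUnion fun r =>
    MeasurableSpace.measurableSet_generateFrom ⟨r, _, h r hS, rfl⟩

/-- The σ-algebra of sets with all time-`r` slices `F r`-measurable. -/
def sliceSA (F : Fin (T+1) → MeasurableSpace Ω) (r : Fin (T+1)) :
    MeasurableSpace (Ω × Fin (T+1)) where
  MeasurableSet' S := MeasurableSet[F r] ((fun ω => (ω, r)) ⁻¹' S)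
  measurableSet_empty := by simpa using (MeasurableSet.empty : MeasurableSet[F r] ∅)
  measurableSet_compl S hS := by
    simpa [Set.preimage_compl] using hS.compl
  measurableSet_iUnion g hg := by
    simpa [Set.preimage_iUnion] using MeasurableSet.iUnion hg

lemma measurable_slice_of_opt {f : Ω × Fin (T+1) → Fin d → ℝ}
    (hf : Measurable[optSigma T F] f) (r : Fin (T+1)) :
    Measurable[F r] fun ω => f (ω, r) := by
  have hle : optSigma T F ≤ sliceSA F r := by
    apply MeasurableSpace.generateFrom_le
    rintro S ⟨t', A, hA, rfl⟩
    show MeasurableSet[F r] ((fun ω => (ω, r)) ⁻¹' (A ×ˢ ({t'} : Set (Fin (T+1)))))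
    by_cases h : r = t'
    · subst h
      have he : ((fun ω => (ω, r)) ⁻¹' (A ×ˢ ({r} : Set (Fin (T+1))))) = A := by
        ext ω; simp
      rw [he]; exact hA
    · have he : ((fun ω => (ω, r)) ⁻¹' (A ×ˢ ({t'} : Set (Fin (T+1))))) = ∅ :=
        Set.eq_empty_iff_forall_notMem.mpr (fun ω hω => h hω.2)
      rw [he]; exact @MeasurableSet.empty _ (F r)
  exact fun S hS => hle _ (hf hS)

/-- The σ-algebra of sets whose slices at times `≥ t` agree with the slice at `t`. -/
def tailSA (t : Fin (T+1)) : MeasurableSpace (Ω × Fin (T+1)) where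
  MeasurableSet' S := ∀ ω (r : Fin (T+1)), t ≤ r → ((ω, r) ∈ S ↔ (ω, t) ∈ S)
  measurableSet_empty := fun _ _ _ => Iff.rfl
  measurableSet_compl S hS := fun ω r hr => by
    simp only [Set.mem_compl_iff]; exact not_congr (hS ω r hr)
  measurableSet_iUnion g hg := fun ω r hr => by
    simp only [Set.mem_iUnion]; exact exists_congr fun n => hg n ω r hr

lemma tail_const {t : Fin (T+1)} {u : Ω × Fin (T+1) → Fin d → ℝ}
    (hu : Measurable[optFilt T F t] u) (ω : Ω) (r : Fin (T+1)) (hr : t ≤ r) :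
    u (ω, r) = u (ω, t) := by
  have hle : optFilt T F t ≤ tailSA t := by
    apply MeasurableSpace.generateFrom_le
    rintro S (⟨r', hr', A, hA, rfl⟩ | ⟨A, hA, rfl⟩)
    · intro ω' r'' hr''
      show (ω', r'') ∈ A ×ˢ ({r'} : Set (Fin (T+1))) ↔ (ω', t) ∈ A ×ˢ ({r'} : Set (Fin (T+1)))
      simp only [Set.mem_prod, Set.mem_singleton_iff]
      constructor
      · rintro ⟨hA', rfl⟩; exact absurd (hr''.trans_lt hr') (lt_irrefl _)
      · rintro ⟨hA', rfl⟩; exact absurd hr' (lt_irrefl _)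
    · intro ω' r'' hr''
      show (ω', r'') ∈ A ×ˢ Set.Ici t ↔ (ω', t) ∈ A ×ˢ Set.Ici t
      simp [Set.mem_prod, hr'']
  have hS : MeasurableSet[tailSA t] (u ⁻¹' {u (ω, r)}) :=
    hle _ (hu (measurableSet_singleton _))
  have h2 := (hS ω r hr).mp (Set.mem_singleton _)
  exact (Set.mem_singleton_iff.mp h2).symm

lemma cutAt_eq_embAt (q : Fin (T+1)) (u : Ω × Fin (T+1) → Fin d → ℝ) :
    cutAt T q u = embAt T q (evalAt T q u) := by
  funext x i
  simp only [cutAt, embAt, evalAt]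
  split_ifs with h
  · rw [← h]
  · rfl

lemma cutTail_congr {t : Fin (T+1)} {u v : Ω × Fin (T+1) → Fin d → ℝ}
    (hu : Measurable[optFilt T F t] u) (hv : Measurable[optFilt T F t] v)
    (h : evalAt T t v = evalAt T t u) : cutTail T t v = cutTail T t u := by
  funext x i
  simp only [cutTail]
  split_ifs with hx
  · have h1 := tail_const hv x.1 x.2 hx
    have h2 := tail_const hu x.1 x.2 hx
    have h3 : v (x.1, t) = u (x.1, t) := congrFun h x.1
    calc v x i = v (x.1, x.2) i := rfl
      _ = v (x.1, t) i := by rw [h1]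
      _ = u (x.1, t) i := by rw [h3]
      _ = u (x.1, x.2) i := by rw [h2]
      _ = u x i := rfl
  · rfl

lemma zero_mem_linf (m : MeasurableSpace Ω) : (0 : Ω → Fin d → ℝ) ∈ Linf m d :=
  ⟨measurable_const, 0, fun _ _ => by simp⟩

lemma mem_linf_opt {f : Ω × Fin (T+1) → Fin d → ℝ}
    (hm : ∀ r, Measurable[F r] fun ω => f (ω, r))
    (hb : ∃ C, ∀ x i, |f x i| ≤ C) : f ∈ Linf (optSigma T F) d := by
  obtain ⟨C, hC⟩ := hb; exact ⟨measurable_opt_of_slices hm, C, hC⟩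

lemma bounded_of_slices {f : Fin (T+1) → Ω → Fin d → ℝ}
    (h : ∀ r, ∃ C, ∀ ω i, |f r ω i| ≤ C) :
    ∃ C, ∀ (r : Fin (T+1)) ω i, |f r ω i| ≤ C := by
  choose C hC using h
  refine ⟨∑ r, max (C r) 0, fun r ω i => ?_⟩
  calc |f r ω i| ≤ C r := hC r ω i
    _ ≤ max (C r) 0 := le_max_left _ _
    _ ≤ ∑ r', max (C r') 0 :=
        Finset.single_le_sum (f := fun r' => max (C r') 0)
          (fun r' _ => le_max_right _ _) (Finset.mem_univ r)

lemma embAt_mem_linf {s : Fin (T+1)} {y : Ω → Fin d → ℝ} (hy : y ∈ Linf (F s) d) :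
    embAt T s y ∈ Linf (optSigma T F) d := by
  obtain ⟨hm, C, hC⟩ := hy
  refine mem_linf_opt (fun r => ?_) ⟨max C 0, fun x i => ?_⟩
  · by_cases h : r = s
    · subst h
      have he : (fun ω => embAt T r y (ω, r)) = y := by funext ω i; simp [embAt]
      rw [he]; exact hm
    · have he : (fun ω => embAt T s y (ω, r)) = (0 : Ω → Fin d → ℝ) := by
        funext ω i; simp [embAt, h]
      rw [he]; exact measurable_const
  · simp only [embAt]; split_ifs
    · exact (hC _ i).trans (le_max_left _ _)
    · simpa using le_max_right C 0

lemma embProc_mem_linf {t : Fin (T+1)} {Y : Fin (T+1) → Ω → Fin d → ℝ}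
    (hY : Y ∈ procSp T F d t) : embProc T t Y ∈ Linf (optSigma T F) d := by
  obtain ⟨hm, ⟨C, hC⟩, -⟩ := hY
  refine mem_linf_opt (fun r => ?_) ⟨max C 0, fun x i => ?_⟩
  · by_cases h : t ≤ r
    · have he : (fun ω => embProc T t Y (ω, r)) = Y r := by funext ω i; simp [embProc, h]
      rw [he]; exact hm r
    · have he : (fun ω => embProc T t Y (ω, r)) = (0 : Ω → Fin d → ℝ) := by
        funext ω i; simp [embProc, h]
      rw [he]; exact measurable_const
  · simp only [embProc]; split_ifs
    · exact (hC _ _ i).trans (le_max_left _ _)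
    · simpa using le_max_right C 0

lemma procSp_intro {t : Fin (T+1)} {W : Fin (T+1) → Ω → Fin d → ℝ}
    (hm : ∀ r, Measurable[F r] (W r))
    (hb : ∀ r, ∃ C, ∀ ω i, |W r ω i| ≤ C)
    (h0 : ∀ r, r < t → W r = 0) : W ∈ procSp T F d t := by
  obtain ⟨C, hC⟩ := bounded_of_slices hb
  exact ⟨hm, ⟨C, fun r ω i => hC r ω i⟩, h0⟩

lemma meas_add_pi {m : MeasurableSpace Ω} {f g : Ω → Fin d → ℝ}
    (hf : Measurable[m] f) (hg : Measurable[m] g) :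
    Measurable[m] (fun ω i => f ω i + g ω i) := by
  rw [measurable_pi_iff]; intro i
  exact (measurable_pi_iff.mp hf i).add (measurable_pi_iff.mp hg i)

lemma meas_ite {m : MeasurableSpace Ω} {f : Ω → Fin d → ℝ} (c : Prop) [Decidable c]
    (hf : Measurable[m] f) : Measurable[m] fun ω i => if c then f ω i else 0 := by
  by_cases h : c
  · simp only [if_pos h]; exact hf
  · simp only [if_neg h]; exact measurable_const

lemma ite_mem_linf {m : MeasurableSpace Ω} {f : Ω → Fin d → ℝ} (c : Prop) [Decidable c]
    (hf : c → f ∈ Linf m d) : (fun ω i => if c then f ω i else 0) ∈ Linf m d := by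
  by_cases h : c
  · simp only [if_pos h]; exact hf h
  · simp only [if_neg h]; exact zero_mem_linf m

/-- The process `Z 1_{[t,s)} + X 1_{𝕋_s}`. -/
def Wmid (T : ℕ) {d : ℕ} (t s : Fin (T+1)) (Z X : Fin (T+1) → Ω → Fin d → ℝ) :
    Fin (T+1) → Ω → Fin d → ℝ :=
  fun r ω i => (if t ≤ r ∧ r < s then Z r ω i else 0) + (if s ≤ r then X r ω i else 0)

lemma Wmid_mem_procSp {t s : Fin (T+1)} (hts : t < s)
    {Z X : Fin (T+1) → Ω → Fin d → ℝ}
    (hZ : ∀ r, t ≤ r → r < s → Z r ∈ Linf (F r) d) (hX : X ∈ procSp T F d s) :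
    Wmid T t s Z X ∈ procSp T F d t := by
  obtain ⟨hmX, ⟨CX, hCX⟩, hX0⟩ := hX
  refine procSp_intro (fun r => ?_) (fun r => ?_) (fun r hr => ?_)
  · refine meas_add_pi ?_ ?_
    · by_cases h : t ≤ r ∧ r < s
      · simp only [if_pos h]; exact (hZ r h.1 h.2).1
      · simp only [if_neg h]; exact measurable_const
    · exact meas_ite _ (hmX r)
  · by_cases h : t ≤ r ∧ r < s
    · obtain ⟨-, CZ, hCZ⟩ := hZ r h.1 h.2
      refine ⟨max CZ 0 + max CX 0, fun ω i => ?_⟩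
      show |(if t ≤ r ∧ r < s then Z r ω i else 0) + (if s ≤ r then X r ω i else 0)| ≤ _
      refine (abs_add_le _ _).trans (add_le_add ?_ ?_)
      · rw [if_pos h]; exact (hCZ ω i).trans (le_max_left _ _)
      · split_ifs
        · exact (hCX r ω i).trans (le_max_left _ _)
        · simpa using le_max_right CX 0
    · refine ⟨max CX 0, fun ω i => ?_⟩
      show |(if t ≤ r ∧ r < s then Z r ω i else 0) + (if s ≤ r then X r ω i else 0)| ≤ _
      rw [if_neg h, zero_add]
      split_ifs
      · exact (hCX r ω i).trans (le_max_left _ _)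
      · simpa using le_max_right CX 0
  · funext ω i
    show (if t ≤ r ∧ r < s then Z r ω i else 0) + (if s ≤ r then X r ω i else 0) = 0
    rw [if_neg (fun hc => absurd hr (not_lt.mpr hc.1)),
      if_neg (not_le.mpr (hr.trans hts)), add_zero]

lemma zero_mem_procSp {s : Fin (T+1)} : (0 : Fin (T+1) → Ω → Fin d → ℝ) ∈ procSp T F d s :=
  ⟨fun _ => measurable_const, ⟨0, fun _ _ _ => by simp⟩, fun _ _ => rfl⟩

/-- The key lemma: slotwise replacements give the premise of `MPTCv`. -/
lemma key {Ω : Type*} [m0 : MeasurableSpace Ω] (P : Measure Ω)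
    (T : ℕ) (F : Fin (T+1) → MeasurableSpace Ω) (μ : Fin (T+1) → Ω → ℝ) (d md : ℕ)
    (Rb : Fin (T+1) → (Ω × Fin (T+1) → Fin d → ℝ) → Set (Ω × Fin (T+1) → Fin d → ℝ))
    (hRb : ∀ t, IsCRMv (optSigma T F) (optFilt T F t) (optMeas T F P μ) d md (Rb t))
    (hTD : ∀ t, TimeDecomp T F t (Rb t))
    (s : Fin (T+1)) (Xb : Ω × Fin (T+1) → Fin d → ℝ) (hXb : Xb ∈ Linf (optSigma T F) d)
    (Br : Fin (T+1) → Set (Ω → Fin d → ℝ)) (hBr : ∀ r, r < s → Br r ⊆ Linf (F r) d)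
    (Bs : Set (Fin (T+1) → Ω → Fin d → ℝ)) (hBs : Bs ⊆ procSp T F d s)
    (ha : ∀ q, q < s → ∀ u ∈ Rb s (cutAt T q Xb),
      ∃ y ∈ Br q, ∃ v ∈ Rb s (embAt T q y), evalAt T q v = evalAt T q u)
    (hb : ∀ u ∈ Rb s (cutTail T s Xb),
      ∃ bs ∈ Bs, ∃ v ∈ Rb s (embProc T s bs), evalAt T s v = evalAt T s u) :
    Rb s Xb ⊆ ⋃ Yb ∈ tupleSet T s Br Bs, Rb s Yb := by
  intro u hu
  rw [hTD s Xb hXb, Set.mem_add] at hu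
  obtain ⟨a, hA, c, hc, hac⟩ := hu
  rw [Set.mem_finset_sum] at hA
  obtain ⟨g, hg, hga⟩ := hA
  have h1 : ∀ q ∈ Iio s, ∃ y ∈ Br q, ∃ v ∈ Rb s (embAt T q y), cutAt T q v = g q := by
    intro q hq
    obtain ⟨uq, huq, hequ⟩ := @hg q hq
    obtain ⟨y, hy, v, hv, hev⟩ := ha q (Finset.mem_Iio.mp hq) uq huq
    refine ⟨y, hy, v, hv, ?_⟩
    rw [cutAt_eq_embAt, hev, ← cutAt_eq_embAt, hequ]
  choose y hy v hv hcv using h1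
  obtain ⟨ut, hut, hcut⟩ := hc
  obtain ⟨bs, hbsB, vt, hvt, hevt⟩ := hb ut hut
  have hctXb : cutTail T s Xb ∈ Linf (optSigma T F) d := by
    obtain ⟨hmXb, C, hC⟩ := hXb
    refine mem_linf_opt (fun r => ?_) ⟨max C 0, fun x i => ?_⟩
    · by_cases h : s ≤ r
      · have he : (fun ω => cutTail T s Xb (ω, r)) = fun ω => Xb (ω, r) := by
          funext ω i; simp [cutTail, h]
        rw [he]; exact measurable_slice_of_opt hmXb r
      · have he : (fun ω => cutTail T s Xb (ω, r)) = (0 : Ω → Fin d → ℝ) := by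
          funext ω i; simp [cutTail, h]
        rw [he]; exact measurable_const
    · simp only [cutTail]; split_ifs
      · exact (hC _ i).trans (le_max_left _ _)
      · simpa using le_max_right C 0
  have hmut : Measurable[optFilt T F s] ut := (((hRb s).1 _ hctXb).1 hut).1.1
  have hmvt : Measurable[optFilt T F s] vt :=
    (((hRb s).1 _ (embProc_mem_linf (hBs hbsB))).1 hvt).1.1
  have hcvt : cutTail T s vt = cutTail T s ut := cutTail_congr hmut hmvt hevt
  set b : Fin (T+1) → Ω → Fin d → ℝ :=
    fun q => if h : q ∈ Iio s then y q h else 0 with hbdef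
  set Yb : Ω × Fin (T+1) → Fin d → ℝ := fun x i =>
    (if x.2 < s then b x.2 x.1 i else 0) + (if s ≤ x.2 then bs x.2 x.1 i else 0) with hYbdef
  have hbmem : ∀ r (hr : r < s), b r = y r (Finset.mem_Iio.mpr hr) := by
    intro r hr
    simp only [hbdef]; exact dif_pos (Finset.mem_Iio.mpr hr)
  have hbLinf : ∀ r, b r ∈ Linf (F r) d := by
    intro r
    by_cases h : r ∈ Iio s
    · simp only [hbdef, dif_pos h]; exact hBr r (Finset.mem_Iio.mp h) (hy r h)
    · simp only [hbdef, dif_neg h]; exact zero_mem_linf _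
  obtain ⟨hmbs, ⟨Cs, hCs⟩, -⟩ := hBs hbsB
  have hYbLinf : Yb ∈ Linf (optSigma T F) d := by
    obtain ⟨Cb, hCb⟩ := bounded_of_slices (f := b) (fun r => (hbLinf r).2)
    refine mem_linf_opt (fun r => ?_) ⟨max Cb 0 + max Cs 0, fun x i => ?_⟩
    · rcases lt_or_ge r s with h | h
      · have he : (fun ω => Yb (ω, r)) = b r := by
          funext ω i; simp [hYbdef, h, not_le.mpr h]
        rw [he]; exact (hbLinf r).1
      · have he : (fun ω => Yb (ω, r)) = bs r := by
          funext ω i; simp [hYbdef, not_lt.mpr h, h]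
        rw [he]; exact hmbs r
    · rcases lt_or_ge x.2 s with h | h
      · have he : Yb x i = b x.2 x.1 i := by simp [hYbdef, h, not_le.mpr h]
        rw [he]
        exact le_trans (hCb _ _ i) (le_trans (le_max_left _ _)
          (le_add_of_nonneg_right (le_max_right _ _)))
      · have he : Yb x i = bs x.2 x.1 i := by simp [hYbdef, not_lt.mpr h, h]
        rw [he]
        exact le_trans (hCs _ _ i) (le_trans (le_max_left _ _)
          (le_add_of_nonneg_left (le_max_right _ _)))
  refine Set.mem_iUnion₂.mpr ⟨Yb, ⟨b, bs, hbsB,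
    fun r hr => by rw [hbmem r hr]; exact hy r _, hYbdef⟩, ?_⟩
  rw [hTD s Yb hYbLinf, Set.mem_add]
  refine ⟨a, ?_, cutTail T s vt, ?_, by rw [hcvt, hcut]; exact hac⟩
  · rw [Set.mem_finset_sum]
    refine ⟨g, fun {q} hq => ?_, hga⟩
    have hq' := Finset.mem_Iio.mp hq
    have hcq : cutAt T q Yb = embAt T q (y q hq) := by
      funext x i
      simp only [hYbdef, cutAt, embAt]
      by_cases h : x.2 = q
      · rw [if_pos h, if_pos h]
        simp [h, hq', not_le.mpr hq', hbmem q hq']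
      · rw [if_neg h, if_neg h]
    rw [hcq]
    exact ⟨v q hq, hv q hq, hcv q hq⟩
  · have hct : cutTail T s Yb = embProc T s bs := by
      funext x i
      simp only [hYbdef, cutTail, embProc]
      by_cases h : s ≤ x.2
      · rw [if_pos h, if_pos h, if_neg (not_lt.mpr h), zero_add]
      · rw [if_neg h, if_neg h]
    rw [hct]
    exact ⟨vt, hvt, rfl⟩

end RMPaperAux

open RMPaper MeasureTheory Finset Pointwise Filter in
/-- Theorem 4.5(2): a multiportfolio time consistent, time decomposable
dynamic risk measure for vectors on the optional filtration induces, via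
`ρ_t(Y) = R̄_t(Y 1_{𝕋_t})_t` and `R^t_s(Z) = R̄_t(Z 1_{{s}})_s`, a jointly multiportfolio
time consistent pair. -/
theorem optional_mptc_implies_joint_mptc
    {Ω : Type} [m0 : MeasurableSpace Ω] (P : Measure Ω) [IsProbabilityMeasure P]
    (T : ℕ) (F : Fin (T+1) → MeasurableSpace Ω)
    (hFmono : Monotone F) (hFle : ∀ r, F r ≤ m0) (hFT : F (Fin.last T) = m0)
    (hF0 : ∀ A : Set Ω, MeasurableSet[F 0] A → P A = 0 ∨ P A = 1)
    (μ : Fin (T+1) → Ω → ℝ) (hμa : ∀ r, Measurable[F r] (μ r))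
    (hμs : ∀ᵐ ω ∂P, ∑ r, μ r ω = 1)
    (hμp : ∃ ε > 0, ∀ᵐ ω ∂P, ∀ r, ε < μ r ω)
    (d md : ℕ) (hmd1 : 1 ≤ md) (hmdd : md ≤ d)
    (Rb : Fin (T+1) → (Ω × Fin (T+1) → Fin d → ℝ) → Set (Ω × Fin (T+1) → Fin d → ℝ))
    (hRb : ∀ t, IsCRMv (optSigma T F) (optFilt T F t) (optMeas T F P μ) d md (Rb t))
    (hTD : ∀ t, TimeDecomp T F t (Rb t))
    (hMPTC : MPTCv T F Rb) :
    JointMPTC T F d (fun t => barToProc T t (Rb t)) (fun t s => barToVec T t s (Rb t)) := by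
  classical
  refine ⟨?_, ?_, ?_⟩
  -- Part (i): multiportfolio time consistency of the induced risk measures for processes.
  · intro t s hts X hX Z hZ B hB hsub
    have hZmid : ∀ r, t ≤ r → r < s → Z r ∈ Linf (F r) d := by
      intro r _ _
      obtain ⟨hm, ⟨C, hC⟩, -⟩ := hZ
      exact ⟨hm r, C, fun ω i => hC r ω i⟩
    have hW : RMPaperAux.Wmid T t s Z X ∈ procSp T F d t :=
      RMPaperAux.Wmid_mem_procSp hts hZmid hX
    have hXbL : embProc T t (RMPaperAux.Wmid T t s Z X) ∈ Linf (optSigma T F) d :=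
      RMPaperAux.embProc_mem_linf hW
    set Br' : Fin (T+1) → Set (Ω → Fin d → ℝ) :=
      fun r => {fun ω i => if t ≤ r ∧ r < s then Z r ω i else 0} with hBr'def
    have hBr' : ∀ r, r < s → Br' r ⊆ Linf (F r) d := by
      intro r hr f hf
      simp only [hBr'def, Set.mem_singleton_iff] at hf
      subst hf
      exact RMPaperAux.ite_mem_linf _ (fun hc => hZmid r hc.1 hc.2)
    have hpre : Rb s (embProc T t (RMPaperAux.Wmid T t s Z X)) ⊆
        ⋃ Yb ∈ tupleSet T s Br' B, Rb s Yb := by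
      refine RMPaperAux.key P T F μ d md Rb hRb hTD s _ hXbL Br' hBr' B hB ?_ ?_
      · intro q hq u hu
        refine ⟨_, Set.mem_singleton _, u, ?_, rfl⟩
        have he : embAt T q (fun ω i => if t ≤ q ∧ q < s then Z q ω i else 0)
            = cutAt T q (embProc T t (RMPaperAux.Wmid T t s Z X)) := by
          funext x i
          simp only [embAt, cutAt, embProc, RMPaperAux.Wmid]
          by_cases h : x.2 = q
          · by_cases h1 : t ≤ q
            · simp [h, h1, hq, not_le.mpr hq]
            · simp [h, h1]
          · simp [h]
        rw [he]; exact hu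
      · intro u hu
        have he : cutTail T s (embProc T t (RMPaperAux.Wmid T t s Z X)) = embProc T s X := by
          funext x i
          simp only [cutTail, embProc, RMPaperAux.Wmid]
          by_cases h : s ≤ x.2
          · simp [h, le_of_lt (lt_of_lt_of_le hts h), not_lt.mpr h]
          · simp [h]
        rw [he] at hu
        have hmem : evalAt T s u ∈ ⋃ Y ∈ B, barToProc T s (Rb s) Y :=
          hsub (show evalAt T s u ∈ evalAt T s '' Rb s (embProc T s X) from ⟨u, hu, rfl⟩)
        rw [Set.mem_iUnion₂] at hmem
        obtain ⟨Y, hY, vv, hvv, hev⟩ := hmem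
        exact ⟨Y, hY, vv, hvv, hev⟩
    have hcon := hMPTC t s hts _ hXbL Br' hBr' B hB hpre
    intro w hw
    obtain ⟨mm, hmm, rfl⟩ :=
      (show w ∈ evalAt T t '' Rb t (embProc T t (RMPaperAux.Wmid T t s Z X)) from hw)
    have hmm2 := hcon hmm
    rw [Set.mem_iUnion₂] at hmm2
    obtain ⟨Yb, ⟨bb, bsel, hbsel, hbmem, hYbeq⟩, hmem⟩ := hmm2
    have he : Yb = embProc T t (RMPaperAux.Wmid T t s Z bsel) := by
      rw [hYbeq]
      funext x i
      simp only [embProc, RMPaperAux.Wmid]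
      rcases lt_or_ge x.2 s with h | h
      · have hbx : bb x.2 = fun ω i => if t ≤ x.2 ∧ x.2 < s then Z x.2 ω i else 0 := by
          have h2 := hbmem x.2 h
          simp only [hBr'def, Set.mem_singleton_iff] at h2
          exact h2
        by_cases h1 : t ≤ x.2
        · simp [h, h1, not_le.mpr h, hbx]
        · simp [h, h1, not_le.mpr h, hbx]
      · simp [not_lt.mpr h, h, le_of_lt (lt_of_lt_of_le hts h)]
    rw [he] at hmem
    exact Set.mem_iUnion₂.mpr ⟨bsel, hbsel, ⟨mm, hmem, rfl⟩⟩
  -- Part (ii)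
  · intro t s hts Xr hXr Br hBrL Z hZ hpre0
    have hXbL : embProc T t (RMPaperAux.Wmid T t s Xr Z) ∈ Linf (optSigma T F) d :=
      RMPaperAux.embProc_mem_linf (RMPaperAux.Wmid_mem_procSp hts hXr hZ)
    set Br' : Fin (T+1) → Set (Ω → Fin d → ℝ) :=
      fun r => if t ≤ r then Br r else {0} with hBr'def
    have hBr' : ∀ r, r < s → Br' r ⊆ Linf (F r) d := by
      intro r hr
      simp only [hBr'def]
      split_ifs with h
      · exact hBrL r h hr
      · intro f hf
        rw [Set.mem_singleton_iff] at hf; subst hf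
        exact RMPaperAux.zero_mem_linf _
    have hZs : ({Z} : Set (Fin (T+1) → Ω → Fin d → ℝ)) ⊆ procSp T F d s := by
      intro f hf; rw [Set.mem_singleton_iff] at hf; subst hf; exact hZ
    have hpre : Rb s (embProc T t (RMPaperAux.Wmid T t s Xr Z)) ⊆
        ⋃ Yb ∈ tupleSet T s Br' {Z}, Rb s Yb := by
      refine RMPaperAux.key P T F μ d md Rb hRb hTD s _ hXbL Br' hBr' _ hZs ?_ ?_
      · intro q hq u hu
        by_cases h1 : t ≤ q
        · have he : cutAt T q (embProc T t (RMPaperAux.Wmid T t s Xr Z)) = embAt T q (Xr q) := by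
            funext x i
            simp only [cutAt, embAt, embProc, RMPaperAux.Wmid]
            by_cases h : x.2 = q
            · simp [h, h1, hq, not_le.mpr hq]
            · simp [h]
          rw [he] at hu
          have hmem : evalAt T q u ∈ ⋃ Y ∈ Br q, barToVec T s q (Rb s) Y :=
            hpre0 q h1 hq
              (show evalAt T q u ∈ evalAt T q '' Rb s (embAt T q (Xr q)) from ⟨u, hu, rfl⟩)
          rw [Set.mem_iUnion₂] at hmem
          obtain ⟨Y, hY, vv, hvv, hev⟩ := hmem
          refine ⟨Y, ?_, vv, hvv, hev⟩
          simp only [hBr'def, if_pos h1]; exact hY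
        · refine ⟨0, ?_, u, ?_, rfl⟩
          · simp only [hBr'def, if_neg h1]; exact rfl
          · have he : embAt T q (0 : Ω → Fin d → ℝ)
                = cutAt T q (embProc T t (RMPaperAux.Wmid T t s Xr Z)) := by
              funext x i
              simp only [cutAt, embAt, embProc, RMPaperAux.Wmid]
              by_cases h : x.2 = q
              · simp [h, h1]
              · simp [h]
            rw [he]; exact hu
      · intro u hu
        refine ⟨Z, rfl, u, ?_, rfl⟩
        have he : embProc T s Z = cutTail T s (embProc T t (RMPaperAux.Wmid T t s Xr Z)) := by
          funext x i
          simp only [cutTail, embProc, RMPaperAux.Wmid]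
          by_cases h : s ≤ x.2
          · simp [h, le_of_lt (lt_of_lt_of_le hts h), not_lt.mpr h]
          · simp [h]
        rw [he]; exact hu
    have hcon := hMPTC t s hts _ hXbL Br' hBr' _ hZs hpre
    intro w hw
    obtain ⟨mm, hmm, rfl⟩ :=
      (show w ∈ evalAt T t '' Rb t (embProc T t (RMPaperAux.Wmid T t s Xr Z)) from hw)
    have hmm2 := hcon hmm
    rw [Set.mem_iUnion₂] at hmm2
    obtain ⟨Yb, ⟨bb, bsel, hbsel, hbmem, hYbeq⟩, hmem⟩ := hmm2
    rw [Set.mem_singleton_iff] at hbsel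
    subst hbsel
    have he : Yb = embProc T t (RMPaperAux.Wmid T t s bb bsel) := by
      rw [hYbeq]
      funext x i
      simp only [embProc, RMPaperAux.Wmid]
      rcases lt_or_ge x.2 s with h | h
      · by_cases h1 : t ≤ x.2
        · simp [h, h1, not_le.mpr h]
        · have hbz : bb x.2 = 0 := by
            have h2 := hbmem x.2 h
            simp only [hBr'def, if_neg h1, Set.mem_singleton_iff] at h2
            exact h2
          simp [h, h1, not_le.mpr h, hbz]
      · simp [not_lt.mpr h, h, le_of_lt (lt_of_lt_of_le hts h)]
    rw [he] at hmem
    refine Set.mem_iUnion.mpr ⟨bb, Set.mem_iUnion.mpr ⟨?_, ⟨mm, hmem, rfl⟩⟩⟩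
    intro r h1 h2
    have h3 := hbmem r h2
    simpa only [hBr'def, if_pos h1] using h3
  -- Part (iii)
  · intro r t s hrt hts X hX B hB hpre0
    have hrs : r < s := hrt.trans hts
    have hXbL : embAt T r X ∈ Linf (optSigma T F) d := RMPaperAux.embAt_mem_linf hX
    set Br' : Fin (T+1) → Set (Ω → Fin d → ℝ) :=
      fun q => if q = r then B else {0} with hBr'def
    have hBr' : ∀ q, q < s → Br' q ⊆ Linf (F q) d := by
      intro q hq
      simp only [hBr'def]
      split_ifs with h
      · subst h; exact hB
      · intro f hf
        rw [Set.mem_singleton_iff] at hf; subst hf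
        exact RMPaperAux.zero_mem_linf _
    have h0s : ({(0 : Fin (T+1) → Ω → Fin d → ℝ)} : Set _) ⊆ procSp T F d s := by
      intro f hf; rw [Set.mem_singleton_iff] at hf; subst hf
      exact RMPaperAux.zero_mem_procSp
    have hpre : Rb s (embAt T r X) ⊆ ⋃ Yb ∈ tupleSet T s Br' {0}, Rb s Yb := by
      refine RMPaperAux.key P T F μ d md Rb hRb hTD s _ hXbL Br' hBr' _ h0s ?_ ?_
      · intro q hq u hu
        by_cases h : q = r
        · subst h
          have he : cutAt T q (embAt T q X) = embAt T q X := by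
            funext x i
            simp only [cutAt, embAt]
            by_cases h2 : x.2 = q <;> simp [h2]
          rw [he] at hu
          have hmem : evalAt T q u ∈ ⋃ Y ∈ B, barToVec T s q (Rb s) Y :=
            hpre0 (show evalAt T q u ∈ evalAt T q '' Rb s (embAt T q X) from ⟨u, hu, rfl⟩)
          rw [Set.mem_iUnion₂] at hmem
          obtain ⟨Y, hY, vv, hvv, hev⟩ := hmem
          refine ⟨Y, ?_, vv, hvv, hev⟩
          simp only [hBr'def, if_pos rfl]; exact hY
        · refine ⟨0, ?_, u, ?_, rfl⟩
          · simp only [hBr'def, if_neg h]; exact rfl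
          · have he : embAt T q (0 : Ω → Fin d → ℝ) = cutAt T q (embAt T r X) := by
              funext x i
              simp only [cutAt, embAt]
              by_cases h2 : x.2 = q
              · simp [h2, h]
              · simp [h2]
            rw [he]; exact hu
      · intro u hu
        refine ⟨0, rfl, u, ?_, rfl⟩
        have he : embProc T s (0 : Fin (T+1) → Ω → Fin d → ℝ) = cutTail T s (embAt T r X) := by
          funext x i
          simp only [embProc, cutTail, embAt]
          by_cases h : s ≤ x.2
          · simp [h, show ¬ x.2 = r from fun hc => absurd (hc ▸ h) (not_le.mpr hrs)]
          · simp [h]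
        rw [he]; exact hu
    have hcon := hMPTC t s hts _ hXbL Br' hBr' _ h0s hpre
    intro w hw
    obtain ⟨mm, hmm, rfl⟩ := (show w ∈ evalAt T r '' Rb t (embAt T r X) from hw)
    have hmm2 := hcon hmm
    rw [Set.mem_iUnion₂] at hmm2
    obtain ⟨Yb, ⟨bb, bsel, hbsel, hbmem, hYbeq⟩, hmem⟩ := hmm2
    rw [Set.mem_singleton_iff] at hbsel
    have hbrB : bb r ∈ B := by
      have h3 := hbmem r hrs
      simpa only [hBr'def, if_pos rfl] using h3
    have he : Yb = embAt T r (bb r) := by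
      rw [hYbeq]
      funext x i
      simp only [embAt]
      by_cases h2 : x.2 = r
      · simp [h2, hrs, not_le.mpr hrs]
      · rcases lt_or_ge x.2 s with h | h
        · have hbz : bb x.2 = 0 := by
            have h4 := hbmem x.2 h
            simp only [hBr'def, if_neg h2, Set.mem_singleton_iff] at h4
            exact h4
          simp [h2, h, hbz, not_le.mpr h]
        · simp [h2, not_lt.mpr h, h, hbsel]
    rw [he] at hmem
    exact Set.mem_iUnion₂.mpr ⟨bb r, hbrB, ⟨mm, hmem, rfl⟩⟩
end
end
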